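/- arXiv:1605.07254 — 4 statements merged into one kernel-verified Lean document; each statement's English description precedes it below -/
import Mathlib

section
/- Let (𝒳, Σ) be a measurable space, and let Q and P be probability measures on 𝒳 such that P has a density with respect to Q bounded by a constant R. Let (e_i)_{i∈ℕ} be measurable real-valued functions on 𝒳 forming an orthonormal system in L²(Q), and let μ_i ≥ 0 be reals such that Σ_i μ_i e_i(x)² < ∞ for every x ∈ 𝒳, ∫ Σ_i μ_i e_i(x)² dQ(x) < ∞, and, for a fixed constant 0 < θ ≤ 1, Σ_i μ_i^θ e_i(x)² < ∞ for every x. For each n ∈ ℕ let X_1^{(n)},…,X_n^{(n)} : Ω → 𝒳 be random points and w_1^{(n)},…,w_n^{(n)} : Ω → ℝ random weights on a probability space Ω (with all the random quantities below integrable), and define the worst-case error e_n(ω)² := Σ_i μ_i ( ∫ e_i dP − Σ_{j=1}^n w_j^{(n)}(ω) e_i(X_j^{(n)}(ω)) )². Assume: (i) for every g ∈ L²(Q), E[(1/n) Σ_{i=1}^n g(X_i^{(n)})²] ≤ D² ∫ g² dQ for a constant D > 0; (ii) there are constants C₁ > 0 and b > 0 with E[e_n] ≤ C₁ n^{−b}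 for all n; (iii) there are constants C₂ > 0 and 0 < c ≤ 1/2 with E[Σ_{j=1}^n (w_j^{(n)})²] ≤ C₂ n^{−2c} for all n. Let a ∈ ℓ²(ℕ) and let f(x) := Σ_i a_i μ_i^{θ/2} e_i(x) (the series converging absolutely at every x). Then there exists a constant C > 0 such that for all n ≥ 1, E[ | Σ_{j=1}^n w_j^{(n)} f(X_j^{(n)}) − ∫ f dP | ] ≤ C n^{−θ b + (1/2 − c)(1 − θ)}. -/
/-!
Fix a threshold `δ > 0` and split `f` into the modes with `μᵢ ≥ δ` (finitely many, since
`∑ μᵢ = ∫ k(x, x) dQ < ∞`) and the tail. On the head, Cauchy–Schwarz against the weights `μᵢ`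
bounds the quadrature error by `‖a‖ δ^{(θ-1)/2} eₙ`. The tail has `L²(Q)` norm at most
`δ^{θ/2} ‖a‖` by Bessel's inequality, so its `P`-integral is at most `R δ^{θ/2} ‖a‖`, and
Cauchy–Schwarz over the nodes together with the sampling assumption bounds the mean of its
quadrature sum by `(E ∑ⱼ wⱼ²)^{1/2} (n D² δ^θ ‖a‖²)^{1/2}`. The choice `δ = n^{-(2b+1-2c)}` makes
the head term and the sampling term both a multiple of `n^{-θb + (1/2-c)(1-θ)}`, and the density
term is smaller because `c ≤ 1/2`.
-/

open MeasureTheory Filter Topology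
open scoped ENNReal NNReal

theorem abs_sum_mul_le_sqrt_mul_sqrt {ι : Type*} (s : Finset ι) (f g : ι → ℝ) :
    |∑ i ∈ s, f i * g i| ≤ √(∑ i ∈ s, f i ^ 2) * √(∑ i ∈ s, g i ^ 2) := by
  rw [← Real.sqrt_mul (Finset.sum_nonneg fun i _ => sq_nonneg (f i))]
  exact Real.abs_le_sqrt (Finset.sum_mul_sq_le_sq_mul_sq s f g)

theorem abs_sum_mul_rpow_mul_le {ι : Type*} {S : Finset ι} {μ : ι → ℝ} {δ θ : ℝ} (hδ : 0 < δ)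
    (hθ : θ ≤ 1) (hS : ∀ i ∈ S, δ ≤ μ i) (a T : ι → ℝ) :
    |∑ i ∈ S, a i * μ i ^ (θ / 2) * T i| ≤
      √(∑ i ∈ S, a i ^ 2) * δ ^ ((θ - 1) / 2) * √(∑ i ∈ S, μ i * T i ^ 2) := by
  have hμ : ∀ i ∈ S, 0 < μ i := fun i hi => hδ.trans_le (hS i hi)
  have hsplit : ∀ i ∈ S,
      a i * μ i ^ (θ / 2) * T i = a i * μ i ^ ((θ - 1) / 2) * (√(μ i) * T i) := fun i hi => by
    have : μ i ^ (θ / 2) = μ i ^ ((θ - 1) / 2) * μ i ^ (1 / 2 : ℝ) := by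
      rw [← Real.rpow_add (hμ i hi)]; ring_nf
    rw [this, Real.sqrt_eq_rpow]; ring
  have hsq₁ : ∀ i ∈ S, (a i * μ i ^ ((θ - 1) / 2)) ^ 2 ≤ δ ^ (θ - 1) * a i ^ 2 := fun i hi => by
    have : (μ i ^ ((θ - 1) / 2)) ^ 2 = μ i ^ (θ - 1) := by
      rw [← Real.rpow_natCast, ← Real.rpow_mul (hμ i hi).le]; ring_nf
    rw [mul_pow, this, mul_comm]
    exact mul_le_mul_of_nonneg_right
      (Real.rpow_le_rpow_of_nonpos hδ (hS i hi) (by linarith)) (sq_nonneg _)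
  have hsq₂ : ∀ i ∈ S, (√(μ i) * T i) ^ 2 = μ i * T i ^ 2 := fun i hi => by
    rw [mul_pow, Real.sq_sqrt (hμ i hi).le]
  calc |∑ i ∈ S, a i * μ i ^ (θ / 2) * T i|
      ≤ √(∑ i ∈ S, (a i * μ i ^ ((θ - 1) / 2)) ^ 2) * √(∑ i ∈ S, (√(μ i) * T i) ^ 2) := by
        rw [Finset.sum_congr rfl hsplit]; exact abs_sum_mul_le_sqrt_mul_sqrt _ _ _
    _ ≤ √(δ ^ (θ - 1) * ∑ i ∈ S, a i ^ 2) * √(∑ i ∈ S, μ i * T i ^ 2) := by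
        rw [Finset.sum_congr rfl hsq₂, Finset.mul_sum]
        gcongr with i hi
        exact hsq₁ i hi
    _ = √(∑ i ∈ S, a i ^ 2) * δ ^ ((θ - 1) / 2) * √(∑ i ∈ S, μ i * T i ^ 2) := by
        rw [Real.sqrt_mul (Real.rpow_nonneg hδ.le _), Real.sqrt_eq_rpow, ← Real.rpow_mul hδ.le]
        ring_nf

theorem measurable_of_hasSum {α : Type*} [MeasurableSpace α] {g : ℕ → α → ℝ} {f : α → ℝ}
    (hg : ∀ i, Measurable (g i)) (hf : ∀ x, HasSum (g · x) (f x)) : Measurable f :=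
  measurable_of_tendsto_metrizable (fun _ => Finset.measurable_sum _ fun i _ => hg i)
    (tendsto_pi_nhds.2 fun x => (hf x).tendsto_sum_nat)

section Lintegral

variable {α : Type*} [MeasurableSpace α] {μ : Measure α}

theorem lintegral_le_of_tendsto {F : ℕ → α → ℝ≥0∞} {G : α → ℝ≥0∞} {b : ℝ≥0∞}
    (hF : ∀ m, Measurable (F m)) (hG : ∀ x, Tendsto (F · x) atTop (𝓝 (G x)))
    (hb : ∀ m, ∫⁻ x, F m x ∂μ ≤ b) : ∫⁻ x, G x ∂μ ≤ b :=
  calc ∫⁻ x, G x ∂μ = ∫⁻ x, liminf (F · x) atTop ∂μ :=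
        lintegral_congr fun x => (hG x).liminf_eq.symm
    _ ≤ liminf (fun m => ∫⁻ x, F m x ∂μ) atTop := lintegral_liminf_le hF
    _ ≤ b := liminf_le_of_le (by isBoundedDefault) fun _ h =>
        h.exists.elim fun m hm => hm.trans (hb m)

theorem lintegral_sqrt_mul_sqrt_le {U V : α → ℝ} (hU : Measurable U) (hV : Measurable V)
    (hU0 : 0 ≤ U) (hV0 : 0 ≤ V) {A B : ℝ}
    (hA : ∫⁻ x, ENNReal.ofReal (U x) ∂μ ≤ ENNReal.ofReal A)
    (hB : ∫⁻ x, ENNReal.ofReal (V x) ∂μ ≤ ENNReal.ofReal B) :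
    ∫⁻ x, ENNReal.ofReal (√(U x) * √(V x)) ∂μ ≤ ENNReal.ofReal (√A * √B) := by
  have hsq : ∀ {W : α → ℝ}, 0 ≤ W → ∀ x,
      ENNReal.ofReal √(W x) ^ (2 : ℝ) = ENNReal.ofReal (W x) := fun hW x => by
    rw [ENNReal.ofReal_rpow_of_nonneg (Real.sqrt_nonneg _) zero_le_two, Real.rpow_two,
      Real.sq_sqrt (hW x)]
  have hhalf : ∀ C : ℝ, ENNReal.ofReal C ^ (1 / 2 : ℝ) = ENNReal.ofReal √C := fun C => by
    rcases le_total 0 C with hC | hC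
    · rw [Real.sqrt_eq_rpow, ENNReal.ofReal_rpow_of_nonneg hC (by norm_num)]
    · rw [ENNReal.ofReal_of_nonpos hC, Real.sqrt_eq_zero_of_nonpos hC, ENNReal.ofReal_zero,
        ENNReal.zero_rpow_of_pos (by norm_num)]
  calc ∫⁻ x, ENNReal.ofReal (√(U x) * √(V x)) ∂μ
      = ∫⁻ x, ((fun x => ENNReal.ofReal √(U x)) * fun x => ENNReal.ofReal √(V x)) x ∂μ := by
        simp only [Pi.mul_apply, ENNReal.ofReal_mul (Real.sqrt_nonneg _)]
    _ ≤ (∫⁻ x, ENNReal.ofReal √(U x) ^ (2 : ℝ) ∂μ) ^ (1 / 2 : ℝ) *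
        (∫⁻ x, ENNReal.ofReal √(V x) ^ (2 : ℝ) ∂μ) ^ (1 / 2 : ℝ) :=
        ENNReal.lintegral_mul_le_Lp_mul_Lq μ Real.HolderConjugate.two_two
          hU.sqrt.ennreal_ofReal.aemeasurable hV.sqrt.ennreal_ofReal.aemeasurable
    _ ≤ ENNReal.ofReal A ^ (1 / 2 : ℝ) * ENNReal.ofReal B ^ (1 / 2 : ℝ) := by
        simp only [hsq hU0, hsq hV0]
        gcongr
    _ = ENNReal.ofReal (√A * √B) := by
        rw [hhalf, hhalf, ENNReal.ofReal_mul (Real.sqrt_nonneg _)]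

theorem integral_le_integral_add_of_lintegral_le {F G H : α → ℝ}
    (hF : AEStronglyMeasurable F μ) (hF0 : 0 ≤ F) (hG : Integrable G μ) (hG0 : 0 ≤ G)
    (hH0 : 0 ≤ H) (hFGH : ∀ x, F x ≤ G x + H x) {T : ℝ} (hT : 0 ≤ T)
    (hH : ∫⁻ x, ENNReal.ofReal (H x) ∂μ ≤ ENNReal.ofReal T) :
    ∫ x, F x ∂μ ≤ ∫ x, G x ∂μ + T := by
  have hG_int0 : 0 ≤ ∫ x, G x ∂μ := integral_nonneg hG0
  rw [integral_eq_lintegral_of_nonneg_ae (ae_of_all _ hF0) hF]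
  refine ENNReal.toReal_le_of_le_ofReal (add_nonneg hG_int0 hT) ?_
  calc ∫⁻ x, ENNReal.ofReal (F x) ∂μ
      ≤ ∫⁻ x, (ENNReal.ofReal (G x) + ENNReal.ofReal (H x)) ∂μ := lintegral_mono fun x => by
        rw [← ENNReal.ofReal_add (hG0 x) (hH0 x)]
        exact ENNReal.ofReal_le_ofReal (hFGH x)
    _ = ENNReal.ofReal (∫ x, G x ∂μ) + ∫⁻ x, ENNReal.ofReal (H x) ∂μ := by
        rw [lintegral_add_left' hG.aemeasurable.ennreal_ofReal,
          ofReal_integral_eq_lintegral_ofReal hG (ae_of_all _ hG0)]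
    _ ≤ ENNReal.ofReal (∫ x, G x ∂μ) + ENNReal.ofReal T := by gcongr
    _ = ENNReal.ofReal (∫ x, G x ∂μ + T) := (ENNReal.ofReal_add hG_int0 hT).symm

end Lintegral

section Orthonormal

variable {ι 𝓧 : Type*} [DecidableEq ι] [MeasurableSpace 𝓧] {Q : Measure 𝓧} {e : ι → 𝓧 → ℝ}

theorem integral_sq_of_orthonormal
    (horth : ∀ i j, ∫ x, e i x * e j x ∂Q = if i = j then 1 else 0) (i : ι) :
    ∫ x, e i x ^ 2 ∂Q = 1 := by
  simpa [sq] using horth i i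

theorem memLp_two_of_orthonormal (hemeas : ∀ i, Measurable (e i))
    (horth : ∀ i j, ∫ x, e i x * e j x ∂Q = if i = j then 1 else 0) (i : ι) :
    MemLp (e i) 2 Q := by
  refine (memLp_two_iff_integrable_sq (hemeas i).aestronglyMeasurable).2 ?_
  by_contra h
  simpa [integral_undef h] using integral_sq_of_orthonormal horth i

theorem lintegral_sq_of_orthonormal (hemeas : ∀ i, Measurable (e i))
    (horth : ∀ i j, ∫ x, e i x * e j x ∂Q = if i = j then 1 else 0) (i : ι) :
    ∫⁻ x, ENNReal.ofReal (e i x ^ 2) ∂Q = ENNReal.ofReal 1 := by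
  rw [← integral_sq_of_orthonormal horth i, ofReal_integral_eq_lintegral_ofReal
    (memLp_two_of_orthonormal hemeas horth i).integrable_sq (ae_of_all _ fun x => sq_nonneg _)]

theorem lintegral_sq_sum_of_orthonormal (hemeas : ∀ i, Measurable (e i))
    (horth : ∀ i j, ∫ x, e i x * e j x ∂Q = if i = j then 1 else 0) (s : Finset ι)
    (c : ι → ℝ) :
    ∫⁻ x, ENNReal.ofReal ((∑ i ∈ s, c i * e i x) ^ 2) ∂Q = ENNReal.ofReal (∑ i ∈ s, c i ^ 2) := by
  have hexp : ∀ x, (∑ i ∈ s, c i * e i x) ^ 2 =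
      ∑ i ∈ s, ∑ j ∈ s, c i * c j * (e i x * e j x) := fun x => by
    rw [sq, Finset.sum_mul_sum]; simp only [mul_mul_mul_comm]
  have hint : ∀ i j, Integrable (fun x => c i * c j * (e i x * e j x)) Q := fun i j =>
    ((memLp_two_of_orthonormal hemeas horth i).integrable_mul
      (memLp_two_of_orthonormal hemeas horth j)).const_mul _
  have hint_sum : ∀ i, Integrable (fun x => ∑ j ∈ s, c i * c j * (e i x * e j x)) Q := fun i =>
    integrable_finsetSum _ fun j _ => hint i j
  have hint_sq : Integrable (fun x => (∑ i ∈ s, c i * e i x) ^ 2) Q := by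
    simp_rw [hexp]; exact integrable_finsetSum _ fun i _ => hint_sum i
  rw [← ofReal_integral_eq_lintegral_ofReal hint_sq (ae_of_all _ fun x => sq_nonneg _)]
  simp_rw [hexp]
  rw [integral_finsetSum _ fun i _ => hint_sum i]
  congr 1
  refine Finset.sum_congr rfl fun i hi => ?_
  simp [integral_finsetSum _ fun j _ => hint i j, integral_const_mul, horth, hi, sq]

theorem lintegral_sq_tsum_le_of_orthonormal {e : ℕ → 𝓧 → ℝ} (hemeas : ∀ i, Measurable (e i))
    (horth : ∀ i j, ∫ x, e i x * e j x ∂Q = if i = j then 1 else 0) {c : ℕ → ℝ}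
    (hc : Summable fun i => c i ^ 2) {g : 𝓧 → ℝ}
    (hg : ∀ x, HasSum (fun i => c i * e i x) (g x)) :
    ∫⁻ x, ENNReal.ofReal (g x ^ 2) ∂Q ≤ ENNReal.ofReal (∑' i, c i ^ 2) := by
  refine lintegral_le_of_tendsto
    (F := fun m x => ENNReal.ofReal ((∑ i ∈ Finset.range m, c i * e i x) ^ 2))
    (fun m => ((Finset.measurable_sum _ fun i _ =>
      (hemeas i).const_mul _).pow_const 2).ennreal_ofReal)
    (fun x => ENNReal.tendsto_ofReal ((hg x).tendsto_sum_nat.pow 2)) fun m => ?_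
  rw [lintegral_sq_sum_of_orthonormal hemeas horth]
  exact ENNReal.ofReal_le_ofReal (hc.sum_le_tsum _ fun i _ => sq_nonneg _)

theorem summable_of_integrable_tsum_mul_sq (hemeas : ∀ i, Measurable (e i))
    (horth : ∀ i j, ∫ x, e i x * e j x ∂Q = if i = j then 1 else 0) {μ : ι → ℝ}
    (hμ : ∀ i, 0 ≤ μ i) (hker : ∀ x, Summable fun i => μ i * e i x ^ 2)
    (hkerint : Integrable (fun x => ∑' i, μ i * e i x ^ 2) Q) : Summable μ := by
  have hint : ∀ i, Integrable (fun x => μ i * e i x ^ 2) Q := fun i =>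
    (memLp_two_of_orthonormal hemeas horth i).integrable_sq.const_mul _
  refine summable_of_sum_le (c := ∫ x, ∑' i, μ i * e i x ^ 2 ∂Q) hμ fun s => ?_
  calc ∑ i ∈ s, μ i = ∫ x, ∑ i ∈ s, μ i * e i x ^ 2 ∂Q := by
        rw [integral_finsetSum _ fun i _ => hint i]
        simp [integral_const_mul, integral_sq_of_orthonormal horth]
    _ ≤ ∫ x, ∑' i, μ i * e i x ^ 2 ∂Q :=
        integral_mono (integrable_finsetSum _ fun i _ => hint i) hkerint fun x =>
          (hker x).sum_le_tsum s fun i _ => mul_nonneg (hμ i) (sq_nonneg _)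

theorem lintegral_sq_sub_sum_le {e : ℕ → 𝓧 → ℝ} (hemeas : ∀ i, Measurable (e i))
    (horth : ∀ i j, ∫ x, e i x * e j x ∂Q = if i = j then 1 else 0) {μ a : ℕ → ℝ}
    (hμ : ∀ i, 0 ≤ μ i) (ha : Summable fun i => a i ^ 2) {θ δ : ℝ} (hθ : 0 ≤ θ) (hδ : 0 ≤ δ)
    {S : Finset ℕ} (hS : ∀ i, δ ≤ μ i → i ∈ S) {f : 𝓧 → ℝ}
    (hf : ∀ x, HasSum (fun i => a i * μ i ^ (θ / 2) * e i x) (f x)) :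
    ∫⁻ x, ENNReal.ofReal ((f x - ∑ i ∈ S, a i * μ i ^ (θ / 2) * e i x) ^ 2) ∂Q ≤
      ENNReal.ofReal (δ ^ θ * ∑' i, a i ^ 2) := by
  set c : ℕ → ℝ := fun i => if i ∈ S then 0 else a i * μ i ^ (θ / 2)
  have hc : ∀ i, c i ^ 2 ≤ δ ^ θ * a i ^ 2 := fun i => by
    by_cases hi : i ∈ S
    · simpa [c, hi] using mul_nonneg (Real.rpow_nonneg hδ θ) (sq_nonneg (a i))
    · have hμδ : μ i ^ θ ≤ δ ^ θ := Real.rpow_le_rpow (hμ i) (not_le.1 (mt (hS i) hi)).le hθ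
      have hsq : (μ i ^ (θ / 2)) ^ 2 = μ i ^ θ := by
        rw [← Real.rpow_natCast, ← Real.rpow_mul (hμ i)]; ring_nf
      simp only [c, if_neg hi, mul_pow, hsq]
      nlinarith [sq_nonneg (a i)]
  have hcsum : Summable fun i => c i ^ 2 :=
    (ha.mul_left (δ ^ θ)).of_nonneg_of_le (fun i => sq_nonneg _) hc
  have htail : ∀ x,
      HasSum (fun i => c i * e i x) (f x - ∑ i ∈ S, a i * μ i ^ (θ / 2) * e i x) := fun x => by
    have hS_sum : HasSum (fun i => if i ∈ S then a i * μ i ^ (θ / 2) * e i x else 0)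
        (∑ i ∈ S, a i * μ i ^ (θ / 2) * e i x) := by
      simpa using hasSum_sum_of_ne_finset_zero (s := S)
        (f := fun i => if i ∈ S then a i * μ i ^ (θ / 2) * e i x else 0) fun i hi => if_neg hi
    have hc_e : (fun i => c i * e i x) = fun i =>
        a i * μ i ^ (θ / 2) * e i x - if i ∈ S then a i * μ i ^ (θ / 2) * e i x else 0 :=
      funext fun i => by by_cases hi : i ∈ S <;> simp [c, hi]
    exact hc_e ▸ (hf x).sub hS_sum
  calc _ ≤ ENNReal.ofReal (∑' i, c i ^ 2) :=
        lintegral_sq_tsum_le_of_orthonormal hemeas horth hcsum htail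
    _ ≤ ENNReal.ofReal (δ ^ θ * ∑' i, a i ^ 2) := by
        rw [← tsum_mul_left]
        exact ENNReal.ofReal_le_ofReal (hcsum.tsum_le_tsum hc (ha.mul_left _))

end Orthonormal

section Density

variable {𝓧 : Type*} [MeasurableSpace 𝓧] {Q : Measure 𝓧} [IsProbabilityMeasure Q]
  {ρ : 𝓧 → ℝ≥0∞} {R : ℝ≥0} {g : 𝓧 → ℝ} {B : ℝ}

theorem lintegral_abs_withDensity_le (hρ : Measurable ρ) (hρR : ∀ x, ρ x ≤ R)
    (hg : Measurable g) (hB : ∫⁻ x, ENNReal.ofReal (g x ^ 2) ∂Q ≤ ENNReal.ofReal B) :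
    ∫⁻ x, ENNReal.ofReal |g x| ∂(Q.withDensity ρ) ≤ ENNReal.ofReal (R * √B) := by
  have hQ : ∫⁻ _, ENNReal.ofReal 1 ∂Q ≤ ENNReal.ofReal 1 := by simp
  have hL1_le_L2 := lintegral_sqrt_mul_sqrt_le (hg.pow_const 2) measurable_const
    (fun x => sq_nonneg (g x)) (fun _ => zero_le_one) hB hQ
  simp only [Real.sqrt_one, mul_one, Real.sqrt_sq_eq_abs] at hL1_le_L2
  calc ∫⁻ x, ENNReal.ofReal |g x| ∂(Q.withDensity ρ)
      ≤ ∫⁻ x, ρ x * ENNReal.ofReal |g x| ∂Q := lintegral_withDensity_le_lintegral_mul Q hρ _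
    _ ≤ ∫⁻ x, R * ENNReal.ofReal |g x| ∂Q := lintegral_mono fun x => by gcongr; exact hρR x
    _ = R * ∫⁻ x, ENNReal.ofReal |g x| ∂Q := lintegral_const_mul _ hg.abs.ennreal_ofReal
    _ ≤ R * ENNReal.ofReal √B := by gcongr
    _ = ENNReal.ofReal (R * √B) := by
        rw [ENNReal.ofReal_mul R.coe_nonneg, ENNReal.ofReal_coe_nnreal]

theorem integrable_withDensity_of_lintegral_sq_le (hρ : Measurable ρ) (hρR : ∀ x, ρ x ≤ R)
    (hg : Measurable g) (hB : ∫⁻ x, ENNReal.ofReal (g x ^ 2) ∂Q ≤ ENNReal.ofReal B) :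
    Integrable g (Q.withDensity ρ) :=
  ⟨hg.aestronglyMeasurable, (hasFiniteIntegral_iff_norm g).2 <|
    (lintegral_abs_withDensity_le hρ hρR hg hB).trans_lt ENNReal.ofReal_lt_top⟩

theorem abs_integral_withDensity_le (hρ : Measurable ρ) (hρR : ∀ x, ρ x ≤ R)
    (hg : Measurable g) (hB : ∫⁻ x, ENNReal.ofReal (g x ^ 2) ∂Q ≤ ENNReal.ofReal B) :
    |∫ x, g x ∂(Q.withDensity ρ)| ≤ R * √B :=
  (norm_integral_le_lintegral_norm g).trans <| ENNReal.toReal_le_of_le_ofReal (by positivity)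
    (lintegral_abs_withDensity_le hρ hρR hg hB)

end Density

section Quadrature

variable {𝓧 : Type*} [MeasurableSpace 𝓧] {P : Measure 𝓧} {n : ℕ}

noncomputable def quadratureError (P : Measure 𝓧) (w : Fin n → ℝ) (x : Fin n → 𝓧)
    (g : 𝓧 → ℝ) : ℝ :=
  ∑ j, w j * g (x j) - ∫ y, g y ∂P

/-- The paper's worst-case error `‖m_P - m_{Pₙ}‖_H`, written in the orthonormal basis
`(μᵢ^{1/2} eᵢ)` of the RKHS. -/
noncomputable def worstCaseError (P : Measure 𝓧) (μ : ℕ → ℝ) (e : ℕ → 𝓧 → ℝ)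
    (w : Fin n → ℝ) (x : Fin n → 𝓧) : ℝ :=
  √(∑' i, μ i * quadratureError P w x (e i) ^ 2)

variable {w : Fin n → ℝ} {x : Fin n → 𝓧}

theorem quadratureError_add {g h : 𝓧 → ℝ} (hg : Integrable g P) (hh : Integrable h P) :
    quadratureError P w x (g + h) = quadratureError P w x g + quadratureError P w x h := by
  simp only [quadratureError, Pi.add_apply, mul_add, Finset.sum_add_distrib, integral_add hg hh]
  ring

theorem quadratureError_sum_mul {ι : Type*} (s : Finset ι) (c : ι → ℝ) {e : ι → 𝓧 → ℝ}
    (he : ∀ i ∈ s, Integrable (e i) P) :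
    quadratureError P w x (fun y => ∑ i ∈ s, c i * e i y) =
      ∑ i ∈ s, c i * quadratureError P w x (e i) := by
  simp only [quadratureError, integral_finsetSum s fun i hi => (he i hi).const_mul (c i),
    integral_const_mul, mul_sub, Finset.sum_sub_distrib, Finset.mul_sum]
  rw [Finset.sum_comm]
  congr 1
  exact Finset.sum_congr rfl fun i _ => Finset.sum_congr rfl fun j _ => by ring

theorem sq_quadratureError_le {g : 𝓧 → ℝ} {M : ℝ} (hM : |∫ y, g y ∂P| ≤ M) :
    quadratureError P w x g ^ 2 ≤ 2 * (∑ j, w j ^ 2) * ∑ j, g (x j) ^ 2 + 2 * M ^ 2 := by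
  have hcs := Finset.sum_mul_sq_le_sq_mul_sq Finset.univ w (fun j => g (x j))
  have hM2 : (∫ y, g y ∂P) ^ 2 ≤ M ^ 2 := sq_le_sq' (abs_le.1 hM).1 (abs_le.1 hM).2
  unfold quadratureError
  nlinarith [sq_nonneg (∑ j, w j * g (x j) + ∫ y, g y ∂P)]

theorem summable_mul_sq_quadratureError {ι : Type*} {e : ι → 𝓧 → ℝ} {μ : ι → ℝ}
    (hμ : ∀ i, 0 ≤ μ i) (hμsum : Summable μ) (hker : ∀ y, Summable fun i => μ i * e i y ^ 2)
    {M : ℝ} (hM : ∀ i, |∫ y, e i y ∂P| ≤ M) :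
    Summable fun i => μ i * quadratureError P w x (e i) ^ 2 := by
  refine Summable.of_nonneg_of_le (fun i => mul_nonneg (hμ i) (sq_nonneg _)) (fun i => ?_)
    (((summable_sum (s := Finset.univ) fun j _ => hker (x j)).mul_left (2 * ∑ j, w j ^ 2)).add
      (hμsum.mul_left (2 * M ^ 2)))
  calc μ i * quadratureError P w x (e i) ^ 2
      ≤ μ i * (2 * (∑ j, w j ^ 2) * ∑ j, e i (x j) ^ 2 + 2 * M ^ 2) :=
        mul_le_mul_of_nonneg_left (sq_quadratureError_le (hM i)) (hμ i)
    _ = _ := by rw [← Finset.mul_sum]; ring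

theorem abs_quadratureError_sum_le_worstCaseError {e : ℕ → 𝓧 → ℝ} {μ a : ℕ → ℝ} {θ δ : ℝ}
    {S : Finset ℕ} (hδ : 0 < δ) (hθ : θ ≤ 1) (hS : ∀ i ∈ S, δ ≤ μ i) (hμ : ∀ i, 0 ≤ μ i)
    (he : ∀ i, Integrable (e i) P) (ha : Summable fun i => a i ^ 2)
    (hsum : Summable fun i => μ i * quadratureError P w x (e i) ^ 2) :
    |quadratureError P w x (fun y => ∑ i ∈ S, a i * μ i ^ (θ / 2) * e i y)| ≤
      √(∑' i, a i ^ 2) * δ ^ ((θ - 1) / 2) * worstCaseError P μ e w x := by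
  rw [quadratureError_sum_mul S (fun i => a i * μ i ^ (θ / 2)) fun i _ => he i]
  refine (abs_sum_mul_rpow_mul_le hδ hθ hS a _).trans ?_
  gcongr
  · exact ha.sum_le_tsum S fun i _ => sq_nonneg _
  · exact Real.sqrt_le_sqrt (hsum.sum_le_tsum S fun i _ => mul_nonneg (hμ i) (sq_nonneg _))

end Quadrature

section RandomQuadrature

variable {𝓧 Ω : Type*} [MeasurableSpace 𝓧] [MeasurableSpace Ω] {Q : Measure 𝓧}
  {ν : Measure Ω} {n : ℕ} {X : Fin n → Ω → 𝓧}

theorem lintegral_sum_sq_comp_le [IsFiniteMeasure ν] (hn : 0 < n) (hX : ∀ j, Measurable (X j))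
    {D : ℝ} (hsamp : ∀ g : 𝓧 → ℝ, Measurable g → Integrable (fun x => g x ^ 2) Q →
      (∀ j, Integrable (fun ω => g (X j ω) ^ 2) ν) →
        ∫ ω, (1 / (n : ℝ)) * ∑ j, g (X j ω) ^ 2 ∂ν ≤ D ^ 2 * ∫ x, g x ^ 2 ∂Q)
    {g : 𝓧 → ℝ} (hg : Measurable g) {B : ℝ} (hB0 : 0 ≤ B)
    (hB : ∫⁻ x, ENNReal.ofReal (g x ^ 2) ∂Q ≤ ENNReal.ofReal B) :
    ∫⁻ ω, ENNReal.ofReal (∑ j, g (X j ω) ^ 2) ∂ν ≤ ENNReal.ofReal (n * (D ^ 2 * B)) := by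
  -- The sampling assumption needs `g (X j)²` integrable: apply it to the truncations
  -- `min |g| M` and let `M → ∞`.
  set gM : ℕ → 𝓧 → ℝ := fun M x => min |g x| M
  have hgM_meas : ∀ M, Measurable (gM M) := fun M => hg.abs.min measurable_const
  have hgM_sq_le : ∀ M x, gM M x ^ 2 ≤ g x ^ 2 := fun M x => by
    rw [← sq_abs (g x)]
    exact pow_le_pow_left₀ (le_min (abs_nonneg _) M.cast_nonneg) (min_le_left _ _) 2
  have hgM_sq_bdd : ∀ M x, gM M x ^ 2 ≤ (M : ℝ) ^ 2 := fun M x =>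
    pow_le_pow_left₀ (le_min (abs_nonneg _) M.cast_nonneg) (min_le_right _ _) 2
  have hlim : ∀ y, Tendsto (fun M => gM M y) atTop (𝓝 |g y|) := fun y =>
    tendsto_const_nhds.congr' <| (tendsto_natCast_atTop_atTop.eventually_ge_atTop |g y|).mono
      fun M hM => (min_eq_left hM).symm
  have hgQ : Integrable (fun x => g x ^ 2) Q :=
    ⟨(hg.pow_const 2).aestronglyMeasurable, (hasFiniteIntegral_iff_ofReal
      (ae_of_all _ fun x => sq_nonneg (g x))).2 (hB.trans_lt ENNReal.ofReal_lt_top)⟩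
  refine lintegral_le_of_tendsto (F := fun M ω => ENNReal.ofReal (∑ j, gM M (X j ω) ^ 2))
    (fun M => (Finset.measurable_sum _ fun j _ =>
      ((hgM_meas M).comp (hX j)).pow_const 2).ennreal_ofReal)
    (fun ω => by
      simpa only [sq_abs] using ENNReal.tendsto_ofReal
        (tendsto_finsetSum Finset.univ fun j _ => (hlim (X j ω)).pow 2)) fun M => ?_
  have hgMQ : Integrable (fun x => gM M x ^ 2) Q :=
    hgQ.mono' ((hgM_meas M).pow_const 2).aestronglyMeasurable
      (ae_of_all _ fun x => by simpa using hgM_sq_le M x)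
  have hgMν : ∀ j, Integrable (fun ω => gM M (X j ω) ^ 2) ν := fun j =>
    (integrable_const ((M : ℝ) ^ 2)).mono'
      (((hgM_meas M).comp (hX j)).pow_const 2).aestronglyMeasurable
      (ae_of_all _ fun ω => by simpa using hgM_sq_bdd M (X j ω))
  have hgMQ_le : ∫ x, gM M x ^ 2 ∂Q ≤ B := by
    rw [integral_eq_lintegral_of_nonneg_ae (ae_of_all _ fun x => sq_nonneg _)
      ((hgM_meas M).pow_const 2).aestronglyMeasurable]
    exact ENNReal.toReal_le_of_le_ofReal hB0
      ((lintegral_mono fun x => ENNReal.ofReal_le_ofReal (hgM_sq_le M x)).trans hB)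
  have hs := hsamp (gM M) (hgM_meas M) hgMQ hgMν
  rw [integral_const_mul] at hs
  rw [← ofReal_integral_eq_lintegral_ofReal (integrable_finsetSum _ fun j _ => hgMν j)
    (ae_of_all _ fun ω => Finset.sum_nonneg fun j _ => sq_nonneg _)]
  refine ENNReal.ofReal_le_ofReal ?_
  have hn' : (0 : ℝ) < n := Nat.cast_pos.2 hn
  calc ∫ ω, ∑ j, gM M (X j ω) ^ 2 ∂ν = n * (1 / n * ∫ ω, ∑ j, gM M (X j ω) ^ 2 ∂ν) := by
        field_simp
    _ ≤ n * (D ^ 2 * ∫ x, gM M x ^ 2 ∂Q) := by gcongr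
    _ ≤ n * (D ^ 2 * B) := by gcongr

theorem lintegral_abs_sum_mul_le {ι : Type*} [Fintype ι] {u v : ι → Ω → ℝ}
    (hu : ∀ j, Measurable (u j)) (hv : ∀ j, Measurable (v j)) {A B : ℝ}
    (hA : ∫⁻ ω, ENNReal.ofReal (∑ j, u j ω ^ 2) ∂ν ≤ ENNReal.ofReal A)
    (hB : ∫⁻ ω, ENNReal.ofReal (∑ j, v j ω ^ 2) ∂ν ≤ ENNReal.ofReal B) :
    ∫⁻ ω, ENNReal.ofReal |∑ j, u j ω * v j ω| ∂ν ≤ ENNReal.ofReal (√A * √B) :=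
  (lintegral_mono fun _ => ENNReal.ofReal_le_ofReal (abs_sum_mul_le_sqrt_mul_sqrt _ _ _)).trans <|
    lintegral_sqrt_mul_sqrt_le
      (Finset.measurable_sum _ fun j _ => (hu j).pow_const 2)
      (Finset.measurable_sum _ fun j _ => (hv j).pow_const 2)
      (fun _ => Finset.sum_nonneg fun _ _ => sq_nonneg _)
      (fun _ => Finset.sum_nonneg fun _ _ => sq_nonneg _) hA hB

theorem measurable_quadratureError (P : Measure 𝓧) {w : Fin n → Ω → ℝ}
    (hw : ∀ j, Measurable (w j)) (hX : ∀ j, Measurable (X j)) {g : 𝓧 → ℝ} (hg : Measurable g) :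
    Measurable fun ω => quadratureError P (w · ω) (X · ω) g :=
  (Finset.measurable_sum _ fun j _ => (hw j).mul (hg.comp (hX j))).sub_const _

theorem lintegral_abs_quadratureError_le [IsProbabilityMeasure Q] [IsProbabilityMeasure ν]
    {ρ : 𝓧 → ℝ≥0∞} {R : ℝ≥0} (hρ : Measurable ρ) (hρR : ∀ x, ρ x ≤ R)
    (hn : 0 < n) (hX : ∀ j, Measurable (X j)) {w : Fin n → Ω → ℝ} (hw : ∀ j, Measurable (w j))
    {D : ℝ} (hsamp : ∀ g : 𝓧 → ℝ, Measurable g → Integrable (fun x => g x ^ 2) Q →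
      (∀ j, Integrable (fun ω => g (X j ω) ^ 2) ν) →
        ∫ ω, (1 / (n : ℝ)) * ∑ j, g (X j ω) ^ 2 ∂ν ≤ D ^ 2 * ∫ x, g x ^ 2 ∂Q)
    {A : ℝ} (hA : ∫⁻ ω, ENNReal.ofReal (∑ j, w j ω ^ 2) ∂ν ≤ ENNReal.ofReal A)
    {g : 𝓧 → ℝ} (hg : Measurable g) {B : ℝ} (hB0 : 0 ≤ B)
    (hB : ∫⁻ x, ENNReal.ofReal (g x ^ 2) ∂Q ≤ ENNReal.ofReal B) :
    ∫⁻ ω, ENNReal.ofReal |quadratureError (Q.withDensity ρ) (w · ω) (X · ω) g| ∂ν ≤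
      ENNReal.ofReal (√A * √(n * (D ^ 2 * B)) + R * √B) := by
  have hpt : ∀ ω, ENNReal.ofReal |quadratureError (Q.withDensity ρ) (w · ω) (X · ω) g| ≤
      ENNReal.ofReal |∑ j, w j ω * g (X j ω)| + ENNReal.ofReal (R * √B) := fun ω => by
    rw [← ENNReal.ofReal_add (abs_nonneg _) (by positivity)]
    exact ENNReal.ofReal_le_ofReal ((abs_sub _ _).trans
      (add_le_add le_rfl (abs_integral_withDensity_le hρ hρR hg hB)))
  calc ∫⁻ ω, ENNReal.ofReal |quadratureError (Q.withDensity ρ) (w · ω) (X · ω) g| ∂ν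
      ≤ ∫⁻ ω, ENNReal.ofReal |∑ j, w j ω * g (X j ω)| ∂ν + ENNReal.ofReal (R * √B) := by
        refine (lintegral_mono hpt).trans_eq ?_
        rw [lintegral_add_right _ measurable_const, lintegral_const, measure_univ, mul_one]
    _ ≤ ENNReal.ofReal (√A * √(n * (D ^ 2 * B))) + ENNReal.ofReal (R * √B) := by
        gcongr
        exact lintegral_abs_sum_mul_le hw (fun j => hg.comp (hX j)) hA
          (lintegral_sum_sq_comp_le hn hX hsamp hg hB0 hB)
    _ = ENNReal.ofReal (√A * √(n * (D ^ 2 * B)) + R * √B) :=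
        (ENNReal.ofReal_add (by positivity) (by positivity)).symm

theorem integral_abs_quadratureError_le [IsProbabilityMeasure Q] [IsProbabilityMeasure ν]
    {ρ : 𝓧 → ℝ≥0∞} {R : ℝ≥0} (hρ : Measurable ρ) (hρR : ∀ x, ρ x ≤ R)
    {e : ℕ → 𝓧 → ℝ} (hemeas : ∀ i, Measurable (e i))
    (horth : ∀ i j, ∫ x, e i x * e j x ∂Q = if i = j then 1 else 0) {μ : ℕ → ℝ}
    (hμ : ∀ i, 0 ≤ μ i) (hμsum : Summable μ) (hker : ∀ x, Summable fun i => μ i * e i x ^ 2)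
    {θ : ℝ} (hθ0 : 0 ≤ θ) (hθ1 : θ ≤ 1) (hn : 0 < n) (hX : ∀ j, Measurable (X j))
    {w : Fin n → Ω → ℝ} (hw : ∀ j, Measurable (w j))
    (hwce : Integrable (fun ω => worstCaseError (Q.withDensity ρ) μ e (w · ω) (X · ω)) ν)
    {D : ℝ} (hsamp : ∀ g : 𝓧 → ℝ, Measurable g → Integrable (fun x => g x ^ 2) Q →
      (∀ j, Integrable (fun ω => g (X j ω) ^ 2) ν) →
        ∫ ω, (1 / (n : ℝ)) * ∑ j, g (X j ω) ^ 2 ∂ν ≤ D ^ 2 * ∫ x, g x ^ 2 ∂Q)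
    {A : ℝ} (hA : ∫⁻ ω, ENNReal.ofReal (∑ j, w j ω ^ 2) ∂ν ≤ ENNReal.ofReal A)
    {a : ℕ → ℝ} (ha : Summable fun i => a i ^ 2) {f : 𝓧 → ℝ}
    (hf : ∀ x, HasSum (fun i => a i * μ i ^ (θ / 2) * e i x) (f x)) {δ : ℝ} (hδ : 0 < δ) :
    ∫ ω, |quadratureError (Q.withDensity ρ) (w · ω) (X · ω) f| ∂ν ≤
      √(∑' i, a i ^ 2) * δ ^ ((θ - 1) / 2) *
          ∫ ω, worstCaseError (Q.withDensity ρ) μ e (w · ω) (X · ω) ∂ν +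
        (√A * √(n * (D ^ 2 * (δ ^ θ * ∑' i, a i ^ 2))) + R * √(δ ^ θ * ∑' i, a i ^ 2)) := by
  set P := Q.withDensity ρ
  set K := √(∑' i, a i ^ 2) * δ ^ ((θ - 1) / 2)
  have hfin : {i | δ ≤ μ i}.Finite := by
    simpa using hμsum.tendsto_cofinite_zero.eventually (gt_mem_nhds hδ)
  set f₁ : 𝓧 → ℝ := fun x => ∑ i ∈ hfin.toFinset, a i * μ i ^ (θ / 2) * e i x
  have he_sq : ∀ i, ∫⁻ x, ENNReal.ofReal (e i x ^ 2) ∂Q ≤ ENNReal.ofReal 1 := fun i =>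
    (lintegral_sq_of_orthonormal hemeas horth i).le
  have he : ∀ i, Integrable (e i) P := fun i =>
    integrable_withDensity_of_lintegral_sq_le hρ hρR (hemeas i) (he_sq i)
  have hfmeas : Measurable f := measurable_of_hasSum (fun i => (hemeas i).const_mul _) hf
  have hf₂meas : Measurable (f - f₁) :=
    hfmeas.sub (Finset.measurable_sum _ fun i _ => (hemeas i).const_mul _)
  have hf₂_sq := lintegral_sq_sub_sum_le hemeas horth hμ ha hθ0 hδ.le
    (fun i hi => hfin.mem_toFinset.2 hi) hf
  have hsplit : ∀ ω, |quadratureError P (w · ω) (X · ω) f| ≤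
      K * worstCaseError P μ e (w · ω) (X · ω) +
        |quadratureError P (w · ω) (X · ω) (f - f₁)| := fun ω => by
    rw [← add_sub_cancel f₁ f, quadratureError_add
      (integrable_finsetSum _ fun i _ => (he i).const_mul _)
      (integrable_withDensity_of_lintegral_sq_le hρ hρR hf₂meas hf₂_sq), add_sub_cancel]
    refine (abs_add_le _ _).trans (add_le_add ?_ le_rfl)
    exact abs_quadratureError_sum_le_worstCaseError hδ hθ1 (fun i hi => hfin.mem_toFinset.1 hi)
      hμ he ha (summable_mul_sq_quadratureError hμ hμsum hker fun i => by
        simpa using abs_integral_withDensity_le hρ hρR (hemeas i) (he_sq i))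
  rw [← integral_const_mul]
  exact integral_le_integral_add_of_lintegral_le
    (measurable_quadratureError P hw hX hfmeas).abs.aestronglyMeasurable (fun ω => abs_nonneg _)
    (hwce.const_mul K) (fun ω => mul_nonneg (by positivity) (Real.sqrt_nonneg _))
    (fun ω => abs_nonneg _) hsplit (by positivity)
    (lintegral_abs_quadratureError_le hρ hρR hn hX hw hsamp hA hf₂meas (by positivity) hf₂_sq)

end RandomQuadrature

theorem threshold_bound_le_rpow {n b c θ C₁ C₂ D R Sa δ : ℝ} (hn : 1 ≤ n) (hc : c ≤ 1 / 2)
    (hR : 0 ≤ R) (hδ : δ = n ^ (-(2 * b + 1 - 2 * c))) :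
    √Sa * δ ^ ((θ - 1) / 2) * (C₁ * n ^ (-b)) +
        (√(C₂ * n ^ (-(2 * c))) * √(n * (D ^ 2 * (δ ^ θ * Sa))) + R * √(δ ^ θ * Sa)) ≤
      √Sa * (C₁ + √C₂ * |D| + R) * n ^ (-(θ * b) + (1 / 2 - c) * (1 - θ)) := by
  have hn0 : 0 < n := one_pos.trans_le hn
  have hpow : ∀ y z : ℝ, (n ^ y) ^ z = n ^ (y * z) := fun y z => (Real.rpow_mul hn0.le y z).symm
  have hsqrt : ∀ y : ℝ, √(n ^ y) = n ^ (y / 2) := fun y => by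
    rw [Real.sqrt_eq_rpow, hpow]; ring_nf
  have h_head : δ ^ ((θ - 1) / 2) * n ^ (-b) = n ^ (-(θ * b) + (1 / 2 - c) * (1 - θ)) := by
    rw [hδ, hpow, ← Real.rpow_add hn0]; congr 1; ring
  have h_sampling : √(C₂ * n ^ (-(2 * c))) * √(n * (D ^ 2 * (δ ^ θ * Sa))) =
      √C₂ * |D| * √Sa * n ^ (-(θ * b) + (1 / 2 - c) * (1 - θ)) := by
    have hprod : n * (D ^ 2 * (δ ^ θ * Sa)) =
        D ^ 2 * Sa * n ^ (1 + -(2 * b + 1 - 2 * c) * θ) := by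
      rw [hδ, hpow, Real.rpow_add hn0, Real.rpow_one]; ring
    have hexp : n ^ (-(2 * c) / 2) * n ^ ((1 + -(2 * b + 1 - 2 * c) * θ) / 2) =
        n ^ (-(θ * b) + (1 / 2 - c) * (1 - θ)) := by
      rw [← Real.rpow_add hn0]; congr 1; ring
    rw [hprod, Real.sqrt_mul' _ (by positivity), Real.sqrt_mul' _ (by positivity),
      Real.sqrt_mul (sq_nonneg D), Real.sqrt_sq_eq_abs, hsqrt, hsqrt, ← hexp]
    ring
  have h_integral : √(δ ^ θ * Sa) ≤ √Sa * n ^ (-(θ * b) + (1 / 2 - c) * (1 - θ)) := by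
    rw [hδ, hpow, Real.sqrt_mul (by positivity), hsqrt, mul_comm]
    gcongr
    · linarith
  calc _ = √Sa * C₁ * (δ ^ ((θ - 1) / 2) * n ^ (-b)) +
        (√(C₂ * n ^ (-(2 * c))) * √(n * (D ^ 2 * (δ ^ θ * Sa))) + R * √(δ ^ θ * Sa)) := by
        ring
    _ ≤ √Sa * C₁ * n ^ (-(θ * b) + (1 / 2 - c) * (1 - θ)) +
        (√C₂ * |D| * √Sa * n ^ (-(θ * b) + (1 / 2 - c) * (1 - θ)) +
          R * (√Sa * n ^ (-(θ * b) + (1 / 2 - c) * (1 - θ)))) := by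
        rw [h_head, h_sampling]; gcongr
    _ = _ := by ring

theorem kernel_quadrature_misspecified_random_general
    {𝓧 : Type*} [MeasurableSpace 𝓧]
    (Q P : Measure 𝓧) [IsProbabilityMeasure Q]
    -- P has a density w.r.t. Q bounded by the constant R
    (R : ℝ≥0) (ρ : 𝓧 → ℝ≥0∞) (hρmeas : Measurable ρ)
    (hρbdd : ∀ x, ρ x ≤ R) (hPQ : P = Q.withDensity ρ)
    -- the Mercer system: orthonormal (eᵢ) in L²(Q) and nonnegative (μᵢ)
    (e : ℕ → 𝓧 → ℝ) (hemeas : ∀ i, Measurable (e i))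
    (horth : ∀ i j, ∫ x, e i x * e j x ∂Q = if i = j then 1 else 0)
    (μ : ℕ → ℝ) (hμ : ∀ i, 0 ≤ μ i)
    (hker : ∀ x, Summable fun i => μ i * (e i x) ^ 2)
    (hkerint : Integrable (fun x => ∑' i, μ i * (e i x) ^ 2) Q)
    (θ : ℝ) (hθ0 : 0 < θ) (hθ1 : θ ≤ 1)
    -- the random points and random weights
    {Ω : Type*} [MeasurableSpace Ω] (μΩ : Measure Ω) [IsProbabilityMeasure μΩ]
    (X : (n : ℕ) → Fin n → Ω → 𝓧) (hXmeas : ∀ n i, Measurable (X n i))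
    (w : (n : ℕ) → Fin n → Ω → ℝ) (hwmeas : ∀ n i, Measurable (w n i))
    -- the worst-case error eₙ(ω), defined by eₙ(ω)² = ∑ᵢ μᵢ (∫ eᵢ dP − ∑ⱼ wⱼ eᵢ(Xⱼ))²
    (en : ℕ → Ω → ℝ) (hen_nonneg : ∀ n ω, 0 ≤ en n ω)
    (hen_def : ∀ n ω, (en n ω) ^ 2 =
      ∑' i, μ i * ((∫ x, e i x ∂P) - ∑ j, w n j ω * e i (X n j ω)) ^ 2)
    -- (i) the sampling assumption
    (D : ℝ)
    (hsamp : ∀ g : 𝓧 → ℝ, Measurable g → Integrable (fun x => (g x) ^ 2) Q →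
      ∀ n : ℕ, 1 ≤ n → (∀ i, Integrable (fun ω => (g (X n i ω)) ^ 2) μΩ) →
        ∫ ω, (1 / (n : ℝ)) * ∑ i, (g (X n i ω)) ^ 2 ∂μΩ ≤
          D ^ 2 * ∫ x, (g x) ^ 2 ∂Q)
    -- (ii) the expected worst-case error decays as n^{−b}
    (b C₁ : ℝ)
    (hen_int : ∀ n, Integrable (en n) μΩ)
    (hen_rate : ∀ n : ℕ, 1 ≤ n → ∫ ω, en n ω ∂μΩ ≤ C₁ * (n : ℝ) ^ (-b))
    -- (iii) the expected squared-weight sum decays as n^{−2c}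
    (c C₂ : ℝ) (hc : c ≤ 1 / 2)
    (hw_int : ∀ n : ℕ, Integrable (fun ω => ∑ j, (w n j ω) ^ 2) μΩ)
    (hw_rate : ∀ n : ℕ, 1 ≤ n →
      ∫ ω, ∑ j, (w n j ω) ^ 2 ∂μΩ ≤ C₂ * (n : ℝ) ^ (-(2 * c)))
    -- the integrand f ∈ H^θ
    (a : ℕ → ℝ) (ha : Summable fun i => (a i) ^ 2)
    (f : 𝓧 → ℝ)
    (hf_abs : ∀ x, Summable fun i => |a i * μ i ^ (θ / 2) * e i x|)
    (hf : ∀ x, f x = ∑' i, a i * μ i ^ (θ / 2) * e i x) :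
    ∃ C > 0, ∀ n : ℕ, 1 ≤ n →
      ∫ ω, |(∑ j, w n j ω * f (X n j ω)) - ∫ x, f x ∂P| ∂μΩ ≤
        C * (n : ℝ) ^ (-(θ * b) + (1 / 2 - c) * (1 - θ)) := by
  subst hPQ
  have hμsum := summable_of_integrable_tsum_mul_sq hemeas horth hμ hker hkerint
  have hf_sum : ∀ x, HasSum (fun i => a i * μ i ^ (θ / 2) * e i x) (f x) := fun x =>
    hf x ▸ (hf_abs x).of_abs.hasSum
  have hwce : ∀ n, (fun ω => worstCaseError (Q.withDensity ρ) μ e (w n · ω) (X n · ω)) = en n :=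
    fun n => funext fun ω => by
      simp only [worstCaseError, quadratureError, sub_sq_comm (∑ j, _), ← hen_def,
        Real.sqrt_sq (hen_nonneg n ω)]
  refine ⟨max (√(∑' i, a i ^ 2) * (C₁ + √C₂ * |D| + R)) 1, by positivity, fun n hn => ?_⟩
  have hA : ∫⁻ ω, ENNReal.ofReal (∑ j, w n j ω ^ 2) ∂μΩ ≤
      ENNReal.ofReal (C₂ * (n : ℝ) ^ (-(2 * c))) := by
    rw [← ofReal_integral_eq_lintegral_ofReal (hw_int n)
      (ae_of_all _ fun ω => Finset.sum_nonneg fun j _ => sq_nonneg _)]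
    exact ENNReal.ofReal_le_ofReal (hw_rate n hn)
  have hbound := integral_abs_quadratureError_le hρmeas hρbdd hemeas horth hμ hμsum hker
    hθ0.le hθ1 hn (hXmeas n) (hwmeas n) (hwce n ▸ hen_int n)
    (fun g hg hgQ => hsamp g hg hgQ n hn) hA ha hf_sum
    (δ := (n : ℝ) ^ (-(2 * b + 1 - 2 * c))) (by positivity)
  rw [hwce n] at hbound
  calc _ ≤ _ := hbound
    _ ≤ _ := by gcongr; exact hen_rate n hn
    _ ≤ _ := threshold_bound_le_rpow (by exact_mod_cast hn) hc R.coe_nonneg rfl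
    _ ≤ _ := by gcongr; exact le_max_left _ _

/-- Theorem 1 of the paper, stated via a Mercer-type expansion: the RKHS `H` has
orthonormal-basis coordinates `(μᵢ^{1/2} eᵢ)`, its `θ`-th power `H^θ` consists of the
functions `f = ∑ aᵢ μᵢ^{θ/2} eᵢ` with `a ∈ ℓ²`, and `eₙ(ω)` is the worst-case error
`‖m_P − m_{Pₙ}‖_H` expressed in these coordinates.  If the random points satisfy the
sampling condition with proposal `Q` (w.r.t. which `P` has a bounded density), the expected
worst-case error is `O(n^{−b})` and the expected squared-weight sum is `O(n^{−2c})`, then for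
every `f ∈ H^θ` the expected integration error is `O(n^{−θb + (1/2−c)(1−θ)})`. -/
theorem kernel_quadrature_misspecified_random
    {𝓧 : Type*} [MeasurableSpace 𝓧]
    (Q P : Measure 𝓧) [IsProbabilityMeasure Q] [IsProbabilityMeasure P]
    -- P has a density w.r.t. Q bounded by the constant R
    (R : ℝ≥0) (ρ : 𝓧 → ℝ≥0∞) (hρmeas : Measurable ρ)
    (hρbdd : ∀ x, ρ x ≤ R) (hPQ : P = Q.withDensity ρ)
    -- the Mercer system: orthonormal (eᵢ) in L²(Q) and nonnegative (μᵢ)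
    (e : ℕ → 𝓧 → ℝ) (hemeas : ∀ i, Measurable (e i))
    (horth : ∀ i j, ∫ x, e i x * e j x ∂Q = if i = j then 1 else 0)
    (μ : ℕ → ℝ) (hμ : ∀ i, 0 ≤ μ i)
    (hker : ∀ x, Summable fun i => μ i * (e i x) ^ 2)
    (hkerint : Integrable (fun x => ∑' i, μ i * (e i x) ^ 2) Q)
    (θ : ℝ) (hθ0 : 0 < θ) (hθ1 : θ ≤ 1)
    (hkerθ : ∀ x, Summable fun i => μ i ^ θ * (e i x) ^ 2)
    -- the random points and random weights
    {Ω : Type*} [MeasurableSpace Ω] (μΩ : Measure Ω) [IsProbabilityMeasure μΩ]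
    (X : (n : ℕ) → Fin n → Ω → 𝓧) (hXmeas : ∀ n i, Measurable (X n i))
    (w : (n : ℕ) → Fin n → Ω → ℝ) (hwmeas : ∀ n i, Measurable (w n i))
    -- the worst-case error eₙ(ω), defined by eₙ(ω)² = ∑ᵢ μᵢ (∫ eᵢ dP − ∑ⱼ wⱼ eᵢ(Xⱼ))²
    (en : ℕ → Ω → ℝ) (hen_nonneg : ∀ n ω, 0 ≤ en n ω)
    (hen_def : ∀ n ω, (en n ω) ^ 2 =
      ∑' i, μ i * ((∫ x, e i x ∂P) - ∑ j, w n j ω * e i (X n j ω)) ^ 2)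
    -- (i) the sampling assumption
    (D : ℝ) (hD : 0 < D)
    (hsamp : ∀ g : 𝓧 → ℝ, Measurable g → Integrable (fun x => (g x) ^ 2) Q →
      ∀ n : ℕ, 1 ≤ n → (∀ i, Integrable (fun ω => (g (X n i ω)) ^ 2) μΩ) →
        ∫ ω, (1 / (n : ℝ)) * ∑ i, (g (X n i ω)) ^ 2 ∂μΩ ≤
          D ^ 2 * ∫ x, (g x) ^ 2 ∂Q)
    -- (ii) the expected worst-case error decays as n^{−b}
    (b C₁ : ℝ) (hb : 0 < b) (hC₁ : 0 < C₁)
    (hen_int : ∀ n, Integrable (en n) μΩ)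
    (hen_rate : ∀ n : ℕ, 1 ≤ n → ∫ ω, en n ω ∂μΩ ≤ C₁ * (n : ℝ) ^ (-b))
    -- (iii) the expected squared-weight sum decays as n^{−2c}
    (c C₂ : ℝ) (hc0 : 0 < c) (hc : c ≤ 1 / 2) (hC₂ : 0 < C₂)
    (hw_int : ∀ n : ℕ, Integrable (fun ω => ∑ j, (w n j ω) ^ 2) μΩ)
    (hw_rate : ∀ n : ℕ, 1 ≤ n →
      ∫ ω, ∑ j, (w n j ω) ^ 2 ∂μΩ ≤ C₂ * (n : ℝ) ^ (-(2 * c)))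
    -- the integrand f ∈ H^θ
    (a : ℕ → ℝ) (ha : Summable fun i => (a i) ^ 2)
    (f : 𝓧 → ℝ)
    (hf_abs : ∀ x, Summable fun i => |a i * μ i ^ (θ / 2) * e i x|)
    (hf : ∀ x, f x = ∑' i, a i * μ i ^ (θ / 2) * e i x)
    (herr_int : ∀ n : ℕ, Integrable
      (fun ω => |(∑ j, w n j ω * f (X n j ω)) - ∫ x, f x ∂P|) μΩ) :
    ∃ C > 0, ∀ n : ℕ, 1 ≤ n →
      ∫ ω, |(∑ j, w n j ω * f (X n j ω)) - ∫ x, f x ∂P| ∂μΩ ≤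
        C * (n : ℝ) ^ (-(θ * b) + (1 / 2 - c) * (1 - θ)) :=
  kernel_quadrature_misspecified_random_general Q P R ρ hρmeas hρbdd hPQ e hemeas horth μ hμ hker
    hkerint θ hθ0 hθ1 μΩ X hXmeas w hwmeas en hen_nonneg hen_def D hsamp b C₁ hen_int hen_rate c C₂
    hc hw_int hw_rate a ha f hf_abs hf
end

section
/- Let d ≥ 1 and s ∈ ℕ. Then there exists a real-valued Schwartz function ψ on ℝ^d such that: (a) ψ is radial, i.e. ψ(x) = ψ(y) whenever ‖x‖ = ‖y‖; (b) its Fourier transform 𝓕ψ vanishes outside the closed unit ball, i.e. 𝓕ψ(ξ) = 0 for all ‖ξ‖ ≥ 1; (c) ∫_{ℝ^d} x^β ψ(x) dx = 0 for every multi-index β = (β₁,…,β_d) with |β| := Σᵢ βᵢ ≤ s, where x^β := x₁^{β₁}⋯x_d^{β_d}; (d) for every ξ ∈ ℝ^d with ξ ≠ 0, ∫₀^∞ |𝓕ψ(tξ)|² dt/t = 1. -/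
/-!
Take `𝓕ψ(ξ) = c^{-1/2} φ(‖ξ‖²)` for a bump `φ` supported in `(1/8, 3/8)`, where
`c = ∫₀^∞ φ(t²)² dt/t > 0`. A real radial function has a real radial Fourier transform, so
`ψ = 𝓕⁻(𝓕ψ)` is real and radial. Since `𝓕ψ` vanishes near the origin, so do all its derivatives
there, and these are (up to constants) the moments of `ψ`. Finally, `dt/t` is invariant under
dilations, so `∫₀^∞ |𝓕ψ(tξ)|² dt/t = c⁻¹ ∫₀^∞ φ(t²)² dt/t = 1`.
-/

open MeasureTheory
open scoped FourierTransform

open Set Filter Topology SchwartzMap LineDeriv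
open scoped RealInnerProductSpace ComplexConjugate ContDiff

theorem integral_comp_mul_left_Ioi_div (f : ℝ → ℝ) {a : ℝ} (ha : 0 < a) :
    ∫ t in Ioi 0, f (a * t) / t = ∫ t in Ioi 0, f t / t := by
  have h : ∀ t, f (a * t) / t = a * (f (a * t) / (a * t)) := fun t => by
    rw [← mul_div_assoc, mul_div_mul_left _ _ ha.ne']
  simp_rw [h, integral_const_mul, integral_comp_mul_left_Ioi (fun t => f t / t) 0 ha, mul_zero,
    smul_eq_mul, mul_inv_cancel_left₀ ha.ne']

section Fourier

variable {V : Type*} [NormedAddCommGroup V] [InnerProductSpace ℝ V] [FiniteDimensional ℝ V]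
  [MeasurableSpace V] [BorelSpace V]

namespace Real

theorem fourier_eq_of_norm_eq {E : Type*} [NormedAddCommGroup E] [NormedSpace ℂ E] {f : V → E}
    (hf : ∀ x y, ‖x‖ = ‖y‖ → f x = f y) {x y : V} (h : ‖x‖ = ‖y‖) : 𝓕 f x = 𝓕 f y := by
  let A := Submodule.reflection (ℝ ∙ (x - y))ᗮ
  calc 𝓕 f x = 𝓕 (f ∘ A) x := by
        rw [show f ∘ A = f from funext fun v => hf _ _ (A.norm_map v)]
    _ = 𝓕 f y := by rw [fourier_comp_linearIsometry, Submodule.reflection_sub h]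

theorem fourierInv_eq_fourier_of_radial {E : Type*} [NormedAddCommGroup E] [NormedSpace ℂ E]
    {f : V → E} (hf : ∀ x y, ‖x‖ = ‖y‖ → f x = f y) (w : V) : 𝓕⁻ f w = 𝓕 f w := by
  rw [fourierInv_eq_fourier_neg, fourier_eq_of_norm_eq hf (norm_neg w)]

theorem conj_fourier_ofReal (f : V → ℝ) (w : V) :
    conj (𝓕 (fun v => (f v : ℂ)) w) = 𝓕⁻ (fun v => (f v : ℂ)) w := by
  rw [fourier_eq, fourierInv_eq, ← integral_conj]
  congr 1 with v
  rw [Circle.smul_def, Circle.smul_def, smul_eq_mul, smul_eq_mul, map_mul, Complex.conj_ofReal,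
    ← Circle.coe_inv_eq_conj, ← AddChar.map_neg_eq_inv, neg_neg]

end Real

namespace SchwartzMap

theorem integral_eq_zero_of_fourier_eventuallyEq_zero {f : 𝓢(V, ℂ)} (hf : 𝓕 ⇑f =ᶠ[𝓝 0] 0) :
    ∫ x, f x = 0 := by
  simpa [Real.fourier_eq] using hf.eq_of_nhds

/-- The proof reads off `∂_m 𝓕f = -2πi • 𝓕(⟪·, m⟫ • f)`. -/
theorem fourier_smulLeftCLM_inner_eventuallyEq_zero {f : 𝓢(V, ℂ)} (hf : 𝓕 ⇑f =ᶠ[𝓝 0] 0)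
    (m : V) : 𝓕 ⇑(smulLeftCLM ℂ (⟪·, m⟫) f) =ᶠ[𝓝 0] 0 := by
  have hderiv : ⇑(∂_{m} (𝓕 f) : 𝓢(V, ℂ)) =ᶠ[𝓝 0] 0 := by
    filter_upwards [hf.eventuallyEq_nhds] with ξ hξ
    rw [lineDerivOp_apply_eq_fderiv, fourier_coe, hξ.fderiv_eq]
    simp
  rw [lineDerivOp_fourier_eq, FourierTransform.fourier_smul] at hderiv
  filter_upwards [hderiv] with ξ hξ
  simpa [fourier_coe, Real.pi_ne_zero, Complex.I_ne_zero] using hξ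

theorem integral_prod_inner_smul_eq_zero_of_fourier_eventuallyEq_zero {ι : Type*} (m : ι → V)
    (s : Finset ι) {f : 𝓢(V, ℂ)} (hf : 𝓕 ⇑f =ᶠ[𝓝 0] 0) :
    ∫ x, (∏ j ∈ s, ⟪x, m j⟫) • f x = 0 := by
  classical
  induction s using Finset.induction_on generalizing f with
  | empty => simpa using integral_eq_zero_of_fourier_eventuallyEq_zero hf
  | insert a s has ih =>
    have htemp : (⟪·, m a⟫).HasTemperateGrowth := ((innerSL ℝ).flip (m a)).hasTemperateGrowth
    convert ih (fourier_smulLeftCLM_inner_eventuallyEq_zero hf (m a)) using 3 with x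
    rw [smulLeftCLM_apply_apply htemp, Finset.prod_insert has, smul_smul, mul_comm]

theorem integral_monomial_mul_eq_zero_of_fourier_eventuallyEq_zero {d : ℕ}
    {ψ : 𝓢(EuclideanSpace ℝ (Fin d), ℝ)} (hψ : 𝓕 (fun x => (ψ x : ℂ)) =ᶠ[𝓝 0] 0)
    (β : Fin d → ℕ) : ∫ x, (∏ i, x i ^ β i) * ψ x = 0 := by
  -- `Σ i, Fin (β i)` lists every coordinate `i` with multiplicity `β i`.
  have hmonomial : ∀ x : EuclideanSpace ℝ (Fin d),
      ∏ i, x i ^ β i = ∏ p : (Σ i, Fin (β i)), ⟪x, EuclideanSpace.single p.1 1⟫ := fun x => by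
    simp [Fintype.prod_sigma, EuclideanSpace.inner_single_right]
  have hcomplex := integral_prod_inner_smul_eq_zero_of_fourier_eventuallyEq_zero
    (fun p : (Σ i, Fin (β i)) => EuclideanSpace.single p.1 (1 : ℝ)) Finset.univ
    (f := ψ.postcompCLM Complex.ofRealCLM) hψ
  simp only [postcompCLM_apply, Complex.ofRealCLM_apply, ← hmonomial, Complex.real_smul,
    ← Complex.ofReal_mul, integral_complex_ofReal, Complex.ofReal_eq_zero] at hcomplex
  exact hcomplex

end SchwartzMap

end Fourier

noncomputable section

def calderonBump : ContDiffBump (1 / 4 : ℝ) := ⟨1 / 16, 1 / 8, by norm_num, by norm_num⟩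

theorem calderonBump_ne_zero {u : ℝ} (h : calderonBump u ≠ 0) : 1 / 8 < u ∧ u < 3 / 8 := by
  rw [← Function.mem_support, calderonBump.support_eq, Real.ball_eq_Ioo] at h
  norm_num [calderonBump] at h
  exact h

theorem calderonBump_one_fourth : calderonBump (1 / 4) = 1 :=
  calderonBump.one_of_mem_closedBall (Metric.mem_closedBall_self calderonBump.rIn_pos.le)

def calderonConst : ℝ := ∫ t in Ioi 0, calderonBump (t ^ 2) ^ 2 / t

theorem calderonConst_pos : 0 < calderonConst := by
  have hsupp : ∀ t ∈ Ioi (0 : ℝ) \ Ioc (1 / 3) 1, calderonBump (t ^ 2) ^ 2 / t = 0 := by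
    rintro t ⟨ht0, ht⟩
    by_contra hne
    have := calderonBump_ne_zero (u := t ^ 2) fun h => hne (by simp [h])
    simp only [mem_Ioi, mem_Ioc, not_and_or, not_lt, not_le] at ht0 ht
    rcases ht with ht | ht <;> nlinarith
  rw [calderonConst, setIntegral_eq_of_subset_of_forall_sdiff_eq_zero measurableSet_Ioi
    (Ioc_subset_Ioi_self.trans (Ioi_subset_Ioi (by norm_num))) hsupp,
    ← intervalIntegral.integral_of_le (by norm_num)]
  refine intervalIntegral.integral_pos (by norm_num) ?_ ?_ ⟨1 / 2, by norm_num, ?_⟩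
  · refine ((calderonBump.continuous.comp (continuous_pow 2)).pow 2).continuousOn.div
      continuousOn_id fun t ht => ?_
    exact (lt_of_lt_of_le (by norm_num) ht.1).ne'
  · intro t ht
    exact div_nonneg (sq_nonneg _) (lt_of_lt_of_le (by norm_num) ht.1.le).le
  · norm_num [calderonBump_one_fourth]

section Profile

variable {V : Type*} [NormedAddCommGroup V]

variable (V) in
def calderonProfile (ξ : V) : ℝ := calderonBump (‖ξ‖ ^ 2) / √calderonConst

theorem ofReal_calderonProfile_eq_of_norm_eq {ξ η : V} (h : ‖ξ‖ = ‖η‖) :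
    (calderonProfile V ξ : ℂ) = calderonProfile V η := by
  rw [calderonProfile, calderonProfile, h]

theorem calderonProfile_ne_zero {ξ : V} (h : calderonProfile V ξ ≠ 0) :
    1 / 8 < ‖ξ‖ ^ 2 ∧ ‖ξ‖ ^ 2 < 3 / 8 :=
  calderonBump_ne_zero (left_ne_zero_of_mul h)

theorem contDiff_calderonProfile [InnerProductSpace ℝ V] : ContDiff ℝ ∞ (calderonProfile V) :=
  (calderonBump.contDiff.comp (contDiff_norm_sq ℝ)).div_const _

theorem hasCompactSupport_calderonProfile [ProperSpace V] :
    HasCompactSupport (calderonProfile V) := by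
  refine HasCompactSupport.intro (isCompact_closedBall 0 1) fun ξ hξ => ?_
  by_contra hne
  have := (calderonProfile_ne_zero hne).2
  rw [Metric.mem_closedBall, dist_zero_right, not_le] at hξ
  nlinarith

theorem integral_calderonProfile_sq_div [NormedSpace ℝ V] {ξ : V} (hξ : ξ ≠ 0) :
    ∫ t in Ioi 0, calderonProfile V (t • ξ) ^ 2 / t = 1 := by
  have hscale : ∀ t ∈ Ioi (0 : ℝ), calderonProfile V (t • ξ) ^ 2 / t
      = calderonConst⁻¹ * (calderonBump ((‖ξ‖ * t) ^ 2) ^ 2 / t) := by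
    intro t ht
    rw [calderonProfile, norm_smul, Real.norm_of_nonneg (le_of_lt ht), div_pow,
      Real.sq_sqrt calderonConst_pos.le, mul_comm t]
    ring
  rw [setIntegral_congr_fun measurableSet_Ioi hscale, integral_const_mul,
    integral_comp_mul_left_Ioi_div (fun t => calderonBump (t ^ 2) ^ 2) (norm_pos_iff.mpr hξ)]
  exact inv_mul_cancel₀ calderonConst_pos.ne'

end Profile

section Function

variable {V : Type*} [NormedAddCommGroup V] [InnerProductSpace ℝ V] [FiniteDimensional ℝ V]
  [MeasurableSpace V] [BorelSpace V]

variable (V) in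
def calderonProfileSchwartz : 𝓢(V, ℂ) :=
  HasCompactSupport.toSchwartzMap (f := fun ξ => (calderonProfile V ξ : ℂ))
    (hasCompactSupport_calderonProfile.comp_left Complex.ofReal_zero)
    (Complex.ofRealCLM.contDiff.comp contDiff_calderonProfile)

variable (V) in
def calderonFunction : 𝓢(V, ℝ) :=
  (𝓕⁻ (calderonProfileSchwartz V)).postcompCLM Complex.reCLM

theorem ofReal_calderonFunction :
    (fun x => (calderonFunction V x : ℂ)) = 𝓕⁻ (fun ξ => (calderonProfile V ξ : ℂ)) := by
  ext x
  have hreal := Real.conj_fourier_ofReal (calderonProfile V) x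
  rw [← Real.fourierInv_eq_fourier_of_radial fun _ _ => ofReal_calderonProfile_eq_of_norm_eq]
    at hreal
  rw [calderonFunction, postcompCLM_apply, fourierInv_coe]
  exact Complex.conj_eq_iff_re.mp hreal

theorem calderonFunction_eq_of_norm_eq {x y : V} (h : ‖x‖ = ‖y‖) :
    calderonFunction V x = calderonFunction V y := by
  have hradial : ∀ ξ η : V, ‖ξ‖ = ‖η‖ → (calderonProfile V ξ : ℂ) = calderonProfile V η :=
    fun _ _ => ofReal_calderonProfile_eq_of_norm_eq
  apply Complex.ofReal_injective
  rw [congrFun ofReal_calderonFunction, congrFun ofReal_calderonFunction,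
    Real.fourierInv_eq_fourier_of_radial hradial, Real.fourierInv_eq_fourier_of_radial hradial,
    Real.fourier_eq_of_norm_eq hradial h]

theorem fourier_ofReal_calderonFunction :
    𝓕 (fun x => (calderonFunction V x : ℂ)) = fun ξ => (calderonProfile V ξ : ℂ) := by
  rw [ofReal_calderonFunction]
  change 𝓕 (𝓕⁻ ⇑(calderonProfileSchwartz V)) = ⇑(calderonProfileSchwartz V)
  rw [← fourierInv_coe, ← fourier_coe, FourierTransform.fourier_fourierInv_eq]

theorem fourier_ofReal_calderonFunction_eventuallyEq_zero :
    𝓕 (fun x => (calderonFunction V x : ℂ)) =ᶠ[𝓝 0] 0 := by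
  rw [fourier_ofReal_calderonFunction]
  filter_upwards [Metric.ball_mem_nhds (0 : V) (by norm_num : (0 : ℝ) < 1 / 3)] with ξ hξ
  rw [mem_ball_zero_iff] at hξ
  rw [Pi.zero_apply, Complex.ofReal_eq_zero]
  by_contra hne
  have := (calderonProfile_ne_zero hne).1
  nlinarith [norm_nonneg ξ]

end Function

end

theorem exists_calderon_function_general (d : ℕ) (s : ℕ) :
    ∃ ψ : SchwartzMap (EuclideanSpace ℝ (Fin d)) ℝ,
      -- (a) ψ is radial
      (∀ x y : EuclideanSpace ℝ (Fin d), ‖x‖ = ‖y‖ → ψ x = ψ y) ∧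
      -- (b) 𝓕ψ vanishes outside the closed unit ball
      (∀ ξ : EuclideanSpace ℝ (Fin d), 1 ≤ ‖ξ‖ →
        𝓕 (fun x => (ψ x : ℂ)) ξ = 0) ∧
      -- (c) vanishing moments up to order s
      (∀ β : Fin d → ℕ, (∑ i, β i) ≤ s →
        ∫ x : EuclideanSpace ℝ (Fin d), (∏ i, x i ^ β i) * ψ x = 0) ∧
      -- (d) Calderón admissibility
      (∀ ξ : EuclideanSpace ℝ (Fin d), ξ ≠ 0 →
        ∫ t in Set.Ioi (0 : ℝ), ‖𝓕 (fun x => (ψ x : ℂ)) (t • ξ)‖ ^ 2 / t = 1) := by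
  refine ⟨calderonFunction _, fun x y => calderonFunction_eq_of_norm_eq, fun ξ hξ => ?_,
    fun β _ => integral_monomial_mul_eq_zero_of_fourier_eventuallyEq_zero
      fourier_ofReal_calderonFunction_eventuallyEq_zero β, fun ξ hξ => ?_⟩
  · rw [fourier_ofReal_calderonFunction, Complex.ofReal_eq_zero]
    by_contra hne
    nlinarith [(calderonProfile_ne_zero hne).2]
  · simp_rw [fourier_ofReal_calderonFunction, Complex.norm_real, Real.norm_eq_abs, sq_abs]
    exact integral_calderonProfile_sq_div hξ

/-- Lemma 1 of the paper's appendix: for any dimension `d ≥ 1` and any `s ∈ ℕ` there exists a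
real-valued Schwartz function `ψ` on `ℝ^d` that is (a) radial, (b) has Fourier transform
supported in the closed unit ball, (c) has vanishing moments up to order `s`, and (d)
satisfies the Calderón admissibility condition `∫₀^∞ |𝓕ψ(tξ)|² dt/t = 1` for all `ξ ≠ 0`. -/
theorem exists_calderon_function (d : ℕ) (hd : 1 ≤ d) (s : ℕ) :
    ∃ ψ : SchwartzMap (EuclideanSpace ℝ (Fin d)) ℝ,
      -- (a) ψ is radial
      (∀ x y : EuclideanSpace ℝ (Fin d), ‖x‖ = ‖y‖ → ψ x = ψ y) ∧
      -- (b) 𝓕ψ vanishes outside the closed unit ball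
      (∀ ξ : EuclideanSpace ℝ (Fin d), 1 ≤ ‖ξ‖ →
        𝓕 (fun x => (ψ x : ℂ)) ξ = 0) ∧
      -- (c) vanishing moments up to order s
      (∀ β : Fin d → ℕ, (∑ i, β i) ≤ s →
        ∫ x : EuclideanSpace ℝ (Fin d), (∏ i, x i ^ β i) * ψ x = 0) ∧
      -- (d) Calderón admissibility
      (∀ ξ : EuclideanSpace ℝ (Fin d), ξ ≠ 0 →
        ∫ t in Set.Ioi (0 : ℝ), ‖𝓕 (fun x => (ψ x : ℂ)) (t • ξ)‖ ^ 2 / t = 1) :=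
  exists_calderon_function_general d s
end

section
/- Let d ≥ 1, let u be a Schwartz function on ℝ^d, let m ≥ 1 be an integer, and let h := Δ^m u be the m-fold iterated Laplacian of u. Then for every multi-index β = (β₁,…,β_d) with |β| := Σᵢ βᵢ ≤ 2m − 1, one has ∫_{ℝ^d} x^β h(x) dx = 0, where x^β := x₁^{β₁}⋯x_d^{β_d}. -/
open MeasureTheory

/-- The Laplacian of a function on `ℝ^d`, as the sum of its second partial derivatives
along the standard coordinate directions. -/
noncomputable def laplacian {d : ℕ} (F : EuclideanSpace ℝ (Fin d) → ℝ)
    (x : EuclideanSpace ℝ (Fin d)) : ℝ :=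
  ∑ i : Fin d,
    fderiv ℝ (fun y => fderiv ℝ F y (EuclideanSpace.single i 1)) x
      (EuclideanSpace.single i 1)

/-!
Integrating by parts twice in the `i`-th coordinate (the boundary terms vanish because Schwartz
functions decay faster than any polynomial grows), the moment of `∂ᵢ² g` against `x^β` is
`βᵢ (βᵢ - 1)` times the moment of `g` against `x^(β - 2eᵢ)`. Summing over `i`, every moment of
`Δ g` of order `k` is a combination of moments of `g` of order `k - 2`, so a moment of `Δ^m u` of
order below `2m` is eventually multiplied by a coefficient `βᵢ (βᵢ - 1)` with `βᵢ < 2`, i.e. by `0`.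
-/

open scoped SchwartzMap LineDeriv Laplacian

namespace EuclideanSpace

variable {ι : Type*} [Fintype ι]

noncomputable def monomial (β : ι → ℕ) (x : EuclideanSpace ℝ ι) : ℝ := ∏ i, x i ^ β i

theorem abs_monomial_le (β : ι → ℕ) (x : EuclideanSpace ℝ ι) :
    |monomial β x| ≤ ‖x‖ ^ ∑ i, β i := by
  rw [monomial, Finset.abs_prod, ← Finset.prod_pow_eq_pow_sum]
  gcongr with i
  rw [abs_pow]
  exact pow_le_pow_left₀ (abs_nonneg _) (PiLp.norm_apply_le x i) _

variable [DecidableEq ι]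

theorem hasFDerivAt_monomial (β : ι → ℕ) (x : EuclideanSpace ℝ ι) :
    HasFDerivAt (monomial β)
      (∑ i, (∏ j ∈ Finset.univ.erase i, x j ^ β j) •
        ((β i * x i ^ (β i - 1)) • (proj i : EuclideanSpace ℝ ι →L[ℝ] ℝ))) x :=
  HasFDerivAt.finsetProd fun i _ ↦
    (hasDerivAt_pow (β i) (x i)).comp_hasFDerivAt x (proj (𝕜 := ℝ) i).hasFDerivAt

theorem differentiable_monomial (β : ι → ℕ) : Differentiable ℝ (monomial β) :=
  fun x ↦ (hasFDerivAt_monomial β x).differentiableAt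

theorem monomial_update (β : ι → ℕ) (i : ι) (n : ℕ) (x : EuclideanSpace ℝ ι) :
    monomial (Function.update β i n) x = x i ^ n * ∏ j ∈ Finset.univ.erase i, x j ^ β j := by
  rw [monomial, ← Finset.mul_prod_erase _ _ (Finset.mem_univ i), Function.update_self]
  congr 1
  exact Finset.prod_congr rfl fun j hj ↦ by rw [Function.update_of_ne (Finset.ne_of_mem_erase hj)]

theorem fderiv_monomial_single (β : ι → ℕ) (x : EuclideanSpace ℝ ι) (i : ι) :
    fderiv ℝ (monomial β) x (single i 1) = β i * monomial (Function.update β i (β i - 1)) x := by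
  rw [(hasFDerivAt_monomial β x).fderiv, FunLike.coe_sum, Finset.sum_apply,
    Finset.sum_eq_single i (fun j _ hji ↦ by simp [hji]) (by simp), monomial_update]
  simp only [smul_apply, PiLp.proj_apply, PiLp.single_eq_same, smul_eq_mul, mul_one]
  ring

theorem integrable_monomial_mul (β : ι → ℕ) (g : 𝓢(EuclideanSpace ℝ ι, ℝ)) :
    Integrable fun x ↦ monomial β x * g x := by
  refine (g.integrable_pow_mul volume (∑ i, β i)).mono
    ((differentiable_monomial β).continuous.mul g.continuous).aestronglyMeasurable
    (.of_forall fun x ↦ ?_)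
  rw [norm_mul, norm_mul, norm_pow, norm_norm, norm_norm, Real.norm_eq_abs]
  exact mul_le_mul_of_nonneg_right (abs_monomial_le β x) (norm_nonneg _)

theorem integral_monomial_mul_lineDerivOp_single (β : ι → ℕ) (i : ι)
    (g : 𝓢(EuclideanSpace ℝ ι, ℝ)) :
    ∫ x, monomial β x * ∂_{single i (1 : ℝ)} g x
      = -(β i * ∫ x, monomial (Function.update β i (β i - 1)) x * g x) := by
  have h_deriv_mul : Integrable fun x ↦ fderiv ℝ (monomial β) x (single i 1) * g x := by
    simpa only [fderiv_monomial_single, mul_assoc]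
      using (integrable_monomial_mul _ g).const_mul (β i : ℝ)
  rw [← integral_const_mul]
  simp only [← mul_assoc, ← fderiv_monomial_single]
  exact integral_mul_fderiv_eq_neg_fderiv_mul_of_integrable h_deriv_mul
    (integrable_monomial_mul β (∂_{single i (1 : ℝ)} g)) (integrable_monomial_mul β g)
    (fun x _ ↦ differentiable_monomial β x) (fun x _ ↦ g.differentiableAt)

theorem integral_monomial_mul_lineDerivOp_single_twice (β : ι → ℕ) (i : ι)
    (g : 𝓢(EuclideanSpace ℝ ι, ℝ)) :
    ∫ x, monomial β x * ∂_{single i (1 : ℝ)} (∂_{single i (1 : ℝ)} g) x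
      = β i * (β i - 1 : ℕ) * ∫ x, monomial (Function.update β i (β i - 2)) x * g x := by
  rw [integral_monomial_mul_lineDerivOp_single, integral_monomial_mul_lineDerivOp_single,
    Function.update_idem, Function.update_self, Nat.sub_sub]
  ring

theorem integral_monomial_mul_laplacian (β : ι → ℕ) (g : 𝓢(EuclideanSpace ℝ ι, ℝ)) :
    ∫ x, monomial β x * Δ g x
      = ∑ i, β i * (β i - 1 : ℕ) * ∫ x, monomial (Function.update β i (β i - 2)) x * g x := by
  simp only [SchwartzMap.laplacian_eq_sum (basisFun ι ℝ), basisFun_apply, sum_apply,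
    Finset.mul_sum]
  rw [integral_finsetSum _ fun i _ ↦ integrable_monomial_mul β _]
  simp only [integral_monomial_mul_lineDerivOp_single_twice]

theorem integral_monomial_mul_iterate_laplacian_eq_zero (g : 𝓢(EuclideanSpace ℝ ι, ℝ)) (m : ℕ)
    (β : ι → ℕ) (hβ : ∑ i, β i < 2 * m) :
    ∫ x, monomial β x * (Δ^[m] g) x = 0 := by
  induction m generalizing β with
  | zero => omega
  | succ m ih =>
    rw [Function.iterate_succ_apply', integral_monomial_mul_laplacian]
    refine Finset.sum_eq_zero fun i _ ↦ ?_
    rcases lt_or_ge (β i) 2 with hi | hi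
    · have hcoeff : β i * (β i - 1) = 0 := by interval_cases β i <;> rfl
      rw [← Nat.cast_mul, hcoeff, Nat.cast_zero, zero_mul]
    · have hsum : ∑ j, Function.update β i (β i - 2) j + 2 = ∑ j, β j := by
        rw [Finset.sum_update_of_mem (Finset.mem_univ i), Finset.sdiff_singleton_eq_erase,
          ← Finset.add_sum_erase _ _ (Finset.mem_univ i)]
        omega
      rw [ih _ (by omega), mul_zero]

end EuclideanSpace

theorem semiconj_coe_laplacian {d : ℕ} :
    Function.Semiconj (⇑) (Δ : 𝓢(EuclideanSpace ℝ (Fin d), ℝ) → _) laplacian := fun f ↦ by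
  ext x
  rw [SchwartzMap.laplacian_eq_sum (EuclideanSpace.basisFun (Fin d) ℝ), sum_apply]
  simp only [EuclideanSpace.basisFun_apply]
  rfl

theorem iterated_laplacian_moments_vanish_general
    (d : ℕ)
    (u : SchwartzMap (EuclideanSpace ℝ (Fin d)) ℝ)
    (m : ℕ) (hm : 1 ≤ m)
    (h : EuclideanSpace ℝ (Fin d) → ℝ) (hh : h = laplacian^[m] ⇑u) :
    ∀ β : Fin d → ℕ, (∑ i, β i) ≤ 2 * m - 1 →
      ∫ x : EuclideanSpace ℝ (Fin d), (∏ i, x i ^ β i) * h x = 0 := by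
  intro β hβ
  rw [hh, ← semiconj_coe_laplacian.iterate_right m u]
  exact EuclideanSpace.integral_monomial_mul_iterate_laplacian_eq_zero u m β (by omega)

/-- The vanishing-moments claim inside the proof of Lemma 1 of the paper's appendix: if `u` is
a Schwartz function on `ℝ^d` and `h = Δ^m u` is its `m`-fold iterated Laplacian, then all
moments of `h` of order at most `2m − 1` vanish: `∫ x^β h(x) dx = 0` for `|β| ≤ 2m − 1`. -/
theorem iterated_laplacian_moments_vanish
    (d : ℕ) (hd : 1 ≤ d)
    (u : SchwartzMap (EuclideanSpace ℝ (Fin d)) ℝ)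
    (m : ℕ) (hm : 1 ≤ m)
    (h : EuclideanSpace ℝ (Fin d) → ℝ) (hh : h = laplacian^[m] ⇑u) :
    ∀ β : Fin d → ℕ, (∑ i, β i) ≤ 2 * m - 1 →
      ∫ x : EuclideanSpace ℝ (Fin d), (∏ i, x i ^ β i) * h x = 0 :=
  iterated_laplacian_moments_vanish_general d u m hm h hh
end

section
/- Let d ≥ 1, let u be a radial real-valued Schwartz function on ℝ^d (u(x) = u(y) whenever ‖x‖ = ‖y‖) whose Fourier transform 𝓕u vanishes outside the closed unit ball, let m ≥ 1 be an integer, and let h := Δ^m u. Then there exists a constant C ∈ [0, ∞) such that for every ξ ∈ ℝ^d with ξ ≠ 0, the integral ∫₀^∞ |𝓕h(tξ)|² dt/t is finite and equal to C. Moreover, if 𝓕u(ξ₀) ≠ 0 for some ξ₀ ≠ 0, then C > 0. -/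
open MeasureTheory
open scoped FourierTransform

/-!
Since `𝓕 (Δ f) ξ = -(2π)²‖ξ‖² • 𝓕 f ξ`, the Fourier transform of `h` is
`F ξ = (-(2π)²‖ξ‖²)^m • 𝓕 u ξ`. It is radial, because the Fourier transform commutes with the
reflection exchanging two vectors of equal norm; it vanishes outside the unit ball; and, as
`𝓕 u` is bounded and `m ≥ 1`, it is `O(‖ξ‖)`. So `t ↦ ‖F (t • ξ)‖² / t` is bounded near `0` and
vanishes for large `t`, and radiality together with the dilation invariance of `dt / t` makes
its integral independent of `ξ ≠ 0`. Positivity comes from continuity of `F` at a point where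
it does not vanish.
-/

open Real Set SchwartzMap
open scoped LineDeriv Laplacian

namespace SchwartzMap

section Fourier

variable {E F : Type*} [NormedAddCommGroup E] [InnerProductSpace ℝ E] [FiniteDimensional ℝ E]
  [MeasurableSpace E] [BorelSpace E] [NormedAddCommGroup F] [NormedSpace ℂ F] [CompleteSpace F]

theorem fourier_laplacian_apply (f : 𝓢(E, F)) (ξ : E) :
    𝓕 (Δ f) ξ = (-(2 * π) ^ 2 * ‖ξ‖ ^ 2) • 𝓕 f ξ := by
  rw [laplacian_eq_fourierMultiplierCLM, fourierMultiplierCLM_apply,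
    FourierTransform.fourier_smul, FourierTransform.fourier_fourierInv_eq, smul_apply,
    smulLeftCLM_apply_apply (by fun_prop), smul_smul]

theorem fourier_laplacian_iterate_apply (m : ℕ) (f : 𝓢(E, F)) (ξ : E) :
    𝓕 (Δ^[m] f) ξ = (-(2 * π) ^ 2 * ‖ξ‖ ^ 2) ^ m • 𝓕 f ξ := by
  induction m with
  | zero => simp
  | succ n ih =>
    rw [Function.iterate_succ_apply', fourier_laplacian_apply, ih, smul_smul, ← pow_succ']

end Fourier

section Postcomp

variable {E F G : Type*} [NormedAddCommGroup E] [NormedAddCommGroup F] [NormedSpace ℝ F]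
  [NormedAddCommGroup G] [NormedSpace ℝ G]

theorem lineDerivOp_postcompCLM [NormedSpace ℝ E] (L : F →L[ℝ] G) (v : E) (f : 𝓢(E, F)) :
    ∂_{v} (f.postcompCLM L) = (∂_{v} f).postcompCLM L := by
  ext x
  have hcomp : ⇑(f.postcompCLM L) = L ∘ f := rfl
  rw [lineDerivOp_apply_eq_fderiv, hcomp, (L.hasFDerivAt.comp x (f.hasFDerivAt x)).fderiv]
  rfl

variable [InnerProductSpace ℝ E] [FiniteDimensional ℝ E]

theorem laplacian_postcompCLM (L : F →L[ℝ] G) (f : 𝓢(E, F)) :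
    Δ (f.postcompCLM L) = (Δ f).postcompCLM L := by
  simp only [laplacian_eq_sum (stdOrthonormalBasis ℝ E), lineDerivOp_postcompCLM, map_sum]

theorem laplacian_iterate_postcompCLM (L : F →L[ℝ] G) (m : ℕ) (f : 𝓢(E, F)) :
    Δ^[m] (f.postcompCLM L) = (Δ^[m] f).postcompCLM L :=
  (Function.Semiconj.iterate_right (f := postcompCLM L)
    (fun f => (laplacian_postcompCLM L f).symm) m f).symm

end Postcomp

end SchwartzMap

section EuclideanLaplacian

variable {d : ℕ}

theorem laplacian_coe (f : 𝓢(EuclideanSpace ℝ (Fin d), ℝ)) :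
    laplacian ⇑f = ⇑(Δ f : 𝓢(EuclideanSpace ℝ (Fin d), ℝ)) := by
  ext x
  simp only [laplacian, laplacian_eq_sum (EuclideanSpace.basisFun (Fin d) ℝ), sum_apply,
    lineDerivOp_apply_eq_fderiv, EuclideanSpace.basisFun_apply]
  rfl

theorem laplacian_iterate_coe (m : ℕ) (f : 𝓢(EuclideanSpace ℝ (Fin d), ℝ)) :
    laplacian^[m] ⇑f = ⇑((Δ : 𝓢(EuclideanSpace ℝ (Fin d), ℝ) → _)^[m] f) := by
  induction m with
  | zero => rfl
  | succ n ih =>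
    rw [Function.iterate_succ_apply', Function.iterate_succ_apply', ih, laplacian_coe]

end EuclideanLaplacian

def IsRadial {V E : Type*} [Norm V] (f : V → E) : Prop :=
  ∀ x y : V, ‖x‖ = ‖y‖ → f x = f y

theorem IsRadial.fourier {V E : Type*} [NormedAddCommGroup V] [InnerProductSpace ℝ V]
    [FiniteDimensional ℝ V] [MeasurableSpace V] [BorelSpace V] [NormedAddCommGroup E]
    [NormedSpace ℂ E] {f : V → E} (hf : IsRadial f) : IsRadial (𝓕 f) := by
  intro x y hxy
  let A := Submodule.reflection (ℝ ∙ (x - y))ᗮ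
  calc 𝓕 f x = 𝓕 (f ∘ A) x := by rw [show f ∘ A = f from funext fun z => hf _ _ (A.norm_map z)]
    _ = 𝓕 f (A x) := Real.fourier_comp_linearIsometry A f x
    _ = 𝓕 f y := by rw [Submodule.reflection_sub hxy]

theorem integral_Ioi_comp_mul_div_self (g : ℝ → ℝ) {c : ℝ} (hc : 0 < c) :
    ∫ t in Ioi 0, g (c * t) / t = ∫ t in Ioi 0, g t / t := by
  have hscale : ∀ t, g (c * t) / t = c * (g (c * t) / (c * t)) := fun t => by
    rw [← mul_div_assoc, mul_div_mul_left _ _ hc.ne']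
  simp_rw [hscale]
  rw [integral_const_mul, integral_comp_mul_left_Ioi (fun t => g t / t) 0 hc, mul_zero,
    smul_eq_mul, ← mul_assoc, mul_inv_cancel₀ hc.ne', one_mul]

theorem integrableOn_Ioi_div_self {g : ℝ → ℝ} {K T : ℝ} (hg : Measurable g)
    (hle : ∀ t ∈ Ioc 0 T, |g t| ≤ K * t) (hzero : ∀ t, T < t → g t = 0) :
    IntegrableOn (fun t => g t / t) (Ioi 0) := by
  refine IntegrableOn.mono_set (IntegrableOn.union ?_ ?_) (Ioi_subset_Ioc_union_Ioi (b := T))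
  · refine Measure.integrableOn_of_bounded (M := K) (by simp)
      (hg.div measurable_id).aestronglyMeasurable
      ((ae_restrict_iff' measurableSet_Ioc).mpr (ae_of_all _ fun t ht => ?_))
    rw [Real.norm_eq_abs, abs_div, abs_of_pos ht.1, div_le_iff₀ ht.1]
    exact hle t ht
  · exact (integrableOn_congr_fun (fun t ht => by simp [hzero t ht]) measurableSet_Ioi).mpr
      integrableOn_zero

theorem setIntegral_pos_of_continuousOn {X : Type*} [TopologicalSpace X] [MeasurableSpace X]
    [OpensMeasurableSpace X] {μ : Measure X} [μ.IsOpenPosMeasure] {f : X → ℝ} {s : Set X} {x : X}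
    (hs : IsOpen s) (hf : ContinuousOn f s) (hint : IntegrableOn f s μ)
    (hnonneg : ∀ y ∈ s, 0 ≤ f y) (hx : x ∈ s) (hfx : f x ≠ 0) :
    0 < ∫ y in s, f y ∂μ := by
  rw [setIntegral_pos_iff_support_of_nonneg_ae
    ((ae_restrict_iff' hs.measurableSet).mpr (ae_of_all _ hnonneg)) hint, inter_comm]
  exact (hf.isOpen_inter_preimage hs isOpen_compl_singleton).measure_pos μ ⟨x, hx, hfx⟩

section Calderon

variable {V E : Type*} [NormedAddCommGroup V] [NormedSpace ℝ V] [NormedAddCommGroup E]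

noncomputable def calderonIntegral (F : V → E) (ξ : V) : ℝ :=
  ∫ t in Ioi 0, ‖F (t • ξ)‖ ^ 2 / t

theorem calderonIntegral_nonneg (F : V → E) (ξ : V) : 0 ≤ calderonIntegral F ξ :=
  setIntegral_nonneg measurableSet_Ioi fun _ ht => div_nonneg (sq_nonneg _) (le_of_lt ht)

theorem integrableOn_calderon {F : V → E} {K R : ℝ} (hF : Continuous F)
    (hbound : ∀ ξ, ‖F ξ‖ ≤ K * ‖ξ‖) (hsupp : ∀ ξ, R ≤ ‖ξ‖ → F ξ = 0) {ξ : V} (hξ : ξ ≠ 0) :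
    IntegrableOn (fun t => ‖F (t • ξ)‖ ^ 2 / t) (Ioi 0) := by
  have hξ' : 0 < ‖ξ‖ := norm_pos_iff.mpr hξ
  refine integrableOn_Ioi_div_self (K := K ^ 2 * ‖ξ‖ ^ 2 * (R / ‖ξ‖)) (T := R / ‖ξ‖)
    ((hF.comp (continuous_id.smul continuous_const)).norm.pow 2).measurable (fun t ht => ?_)
    (fun t ht => ?_)
  · have ht0 := ht.1.le
    calc |‖F (t • ξ)‖ ^ 2| = ‖F (t • ξ)‖ ^ 2 := abs_of_nonneg (sq_nonneg _)
      _ ≤ (K * (t * ‖ξ‖)) ^ 2 := by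
          gcongr
          simpa [norm_smul, abs_of_nonneg ht0] using hbound (t • ξ)
      _ = K ^ 2 * ‖ξ‖ ^ 2 * t * t := by ring
      _ ≤ K ^ 2 * ‖ξ‖ ^ 2 * (R / ‖ξ‖) * t := by gcongr; exact ht.2
  · rw [hsupp _ ?_, norm_zero, zero_pow two_ne_zero]
    rw [norm_smul, Real.norm_eq_abs]
    exact ((div_lt_iff₀ hξ').mp ht).le.trans (by gcongr; exact le_abs_self t)

theorem IsRadial.calderonIntegral_eq {F : V → E} (hF : IsRadial F) {ξ ζ : V} (hξ : ξ ≠ 0)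
    (hζ : ζ ≠ 0) :
    calderonIntegral F ξ = calderonIntegral F ζ := by
  have hξ' : 0 < ‖ξ‖ := norm_pos_iff.mpr hξ
  have hζ' : 0 < ‖ζ‖ := norm_pos_iff.mpr hζ
  have hrescale : ∀ t : ℝ, F (t • ξ) = F ((‖ξ‖ / ‖ζ‖ * t) • ζ) := fun t => hF _ _ (by
    rw [norm_smul, norm_smul, Real.norm_eq_abs, Real.norm_eq_abs, abs_mul, abs_div, abs_norm,
      abs_norm]
    field_simp)
  simp only [calderonIntegral, hrescale]
  exact integral_Ioi_comp_mul_div_self (fun s => ‖F (s • ζ)‖ ^ 2) (by positivity)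

theorem calderonIntegral_pos {F : V → E} {ξ : V} (hF : Continuous F)
    (hint : IntegrableOn (fun t => ‖F (t • ξ)‖ ^ 2 / t) (Ioi 0)) (hξ : F ξ ≠ 0) :
    0 < calderonIntegral F ξ :=
  setIntegral_pos_of_continuousOn isOpen_Ioi
    ((((hF.comp (continuous_id.smul continuous_const)).norm.pow 2).continuousOn).div
      continuousOn_id fun t ht => ne_of_gt ht) hint
    (fun t ht => div_nonneg (sq_nonneg _) (le_of_lt ht)) (mem_Ioi.mpr one_pos) (by simpa using hξ)

end Calderon

theorem norm_pow_norm_sq_smul_le {V E : Type*} [NormedAddCommGroup V] [NormedAddCommGroup E]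
    [NormedSpace ℝ E] {G : V → E} {M : ℝ} (hG : ∀ ξ, ‖G ξ‖ ≤ M)
    (hsupp : ∀ ξ, 1 ≤ ‖ξ‖ → G ξ = 0) {m : ℕ} (hm : m ≠ 0) (c : ℝ) (ξ : V) :
    ‖(c * ‖ξ‖ ^ 2) ^ m • G ξ‖ ≤ |c| ^ m * M * ‖ξ‖ := by
  rcases le_or_gt 1 ‖ξ‖ with h1 | h1
  · have hM : 0 ≤ M := (norm_nonneg _).trans (hG ξ)
    simp only [hsupp ξ h1, smul_zero, norm_zero]
    positivity
  · calc ‖(c * ‖ξ‖ ^ 2) ^ m • G ξ‖ = |c| ^ m * ‖ξ‖ ^ (2 * m) * ‖G ξ‖ := by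
          rw [norm_smul, norm_pow, Real.norm_eq_abs, abs_mul, abs_pow, abs_norm, mul_pow, pow_mul]
      _ ≤ |c| ^ m * ‖ξ‖ * M := by
          gcongr
          · exact pow_le_of_le_one (norm_nonneg _) h1.le (by omega)
          · exact hG ξ
      _ = |c| ^ m * M * ‖ξ‖ := by ring

/-- The finiteness-and-constancy claim inside the proof of Lemma 1 of the paper's appendix:
if `u` is a radial real Schwartz function on `ℝ^d` whose Fourier transform vanishes outside
the closed unit ball and `h = Δ^m u`, then the Calderón integral `∫₀^∞ |𝓕h(tξ)|² dt/t` is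
finite and takes the same value `C ≥ 0` for every `ξ ≠ 0`; moreover `C > 0` whenever
`𝓕u(ξ₀) ≠ 0` for some `ξ₀ ≠ 0`. -/
theorem calderon_integral_constant
    (d : ℕ) (hd : 1 ≤ d)
    (u : SchwartzMap (EuclideanSpace ℝ (Fin d)) ℝ)
    (hradial : ∀ x y : EuclideanSpace ℝ (Fin d), ‖x‖ = ‖y‖ → u x = u y)
    (hsupp : ∀ ξ : EuclideanSpace ℝ (Fin d), 1 ≤ ‖ξ‖ →
      𝓕 (fun x => (u x : ℂ)) ξ = 0)
    (m : ℕ) (hm : 1 ≤ m)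
    (h : EuclideanSpace ℝ (Fin d) → ℝ) (hh : h = laplacian^[m] ⇑u) :
    ∃ C : ℝ, 0 ≤ C ∧
      (∀ ξ : EuclideanSpace ℝ (Fin d), ξ ≠ 0 →
        IntegrableOn (fun t => ‖𝓕 (fun x => (h x : ℂ)) (t • ξ)‖ ^ 2 / t)
          (Set.Ioi (0 : ℝ)) volume ∧
        ∫ t in Set.Ioi (0 : ℝ), ‖𝓕 (fun x => (h x : ℂ)) (t • ξ)‖ ^ 2 / t = C) ∧
      ((∃ ξ₀ : EuclideanSpace ℝ (Fin d), ξ₀ ≠ 0 ∧ 𝓕 (fun x => (u x : ℂ)) ξ₀ ≠ 0) →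
        0 < C) := by
  let v := u.postcompCLM Complex.ofRealCLM
  let F := 𝓕 (Δ^[m] v)
  have hhF : 𝓕 (fun x => (h x : ℂ)) = ⇑F := by
    rw [fourier_coe, laplacian_iterate_postcompCLM, hh, laplacian_iterate_coe]
    rfl
  have hFmul : ∀ ξ, F ξ = (-(2 * π) ^ 2 * ‖ξ‖ ^ 2) ^ m • 𝓕 ⇑v ξ :=
    fourier_laplacian_iterate_apply m v
  have hvrad : IsRadial (𝓕 ⇑v) :=
    IsRadial.fourier (f := ⇑v) fun x y hxy => congrArg Complex.ofReal (hradial x y hxy)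
  have hFrad : IsRadial F := fun x y hxy => by rw [hFmul, hFmul, hxy, hvrad x y hxy]
  have hFbound : ∀ ξ, ‖F ξ‖ ≤ |-(2 * π) ^ 2| ^ m * SchwartzMap.seminorm ℝ 0 0 (𝓕 v) * ‖ξ‖ :=
    fun ξ => by
      rw [hFmul]
      exact norm_pow_norm_sq_smul_le (norm_le_seminorm ℝ (𝓕 v)) hsupp (by omega) _ ξ
  have hFsupp : ∀ ξ, 1 ≤ ‖ξ‖ → F ξ = 0 := fun ξ hξ => by
    rw [hFmul, show 𝓕 ⇑v ξ = 0 from hsupp ξ hξ, smul_zero]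
  have hFint : ∀ ξ, ξ ≠ 0 → IntegrableOn (fun t => ‖F (t • ξ)‖ ^ 2 / t) (Ioi 0) :=
    fun ξ => integrableOn_calderon F.continuous hFbound hFsupp
  let e : EuclideanSpace ℝ (Fin d) := EuclideanSpace.single ⟨0, hd⟩ 1
  have he : e ≠ 0 := by simp [e]
  rw [hhF]
  refine ⟨calderonIntegral F e, calderonIntegral_nonneg F e,
    fun ξ hξ => ⟨hFint ξ hξ, hFrad.calderonIntegral_eq hξ he⟩, ?_⟩
  rintro ⟨ξ₀, hξ₀, hne⟩
  rw [hFrad.calderonIntegral_eq he hξ₀]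
  refine calderonIntegral_pos F.continuous (hFint ξ₀ hξ₀) ?_
  rw [hFmul]
  exact smul_ne_zero (pow_ne_zero _ (by simp [hξ₀, pi_ne_zero])) hne
end
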